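/- arXiv:2107.11242 — 10 statements merged into one kernel-verified Lean document; each statement's English description precedes it below -/
import Mathlib

section
/- Assume λ₁ > μ₁. Then the host–virus vector field F has a zero in the open positive orthant (0,∞)⁴ if and only if the coexistence condition (m v − (r+v))·(1−q)·D·n̄₁ₐ > μ₂·(r+v) holds. -/
/-- The host–virus vector field in coordinates `(n₁ₐ, n₁d, n₁ᵢ, n₂)`. -/
noncomputable def hostVirusField (lam mu C D q kap sig r v mu2 m : ℝ)
    (n : Fin 4 → ℝ) : Fin 4 → ℝ :=
  ![n 0 * (lam - mu - C * (n 0 + n 1 + n 2) - D * n 3) + sig * n 1 + r * n 2,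
    q * D * n 0 * n 3 - (kap * mu + sig) * n 1,
    (1 - q) * D * n 0 * n 3 - (r + v) * n 2,
    m * v * n 2 - (1 - q) * D * n 0 * n 3 - mu2 * n 3]

set_option maxHeartbeats 1000000 in
theorem coexistence_equilibrium_iff
    (lam mu C D q kap sig r v mu2 m : ℝ)
    (hmu : 0 < mu) (hlm : mu < lam) (hC : 0 < C) (hD : 0 < D)
    (hq0 : 0 < q) (hq1 : q < 1) (hkap : 0 ≤ kap) (hsig : 0 < sig)
    (hr : 0 < r) (hv : 0 < v) (hmu2 : 0 < mu2) (hm : 0 < m) :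
    (∃ p : Fin 4 → ℝ, (∀ i, 0 < p i) ∧ hostVirusField lam mu C D q kap sig r v mu2 m p = 0)
      ↔ (m * v - (r + v)) * (1 - q) * D * ((lam - mu) / C) > mu2 * (r + v) := by
  have hq1' : 0 < 1 - q := by linarith
  have hrv : 0 < r + v := by linarith
  have hks : 0 < kap * mu + sig := by nlinarith
  have hLm : 0 < lam - mu := by linarith
  constructor
  · rintro ⟨p, hp, hF⟩
    have ha : 0 < p 0 := hp 0
    have hd : 0 < p 1 := hp 1
    have hi : 0 < p 2 := hp 2
    have hw : 0 < p 3 := hp 3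
    have e0 := congrFun hF 0
    have e1 := congrFun hF 1
    have e2 := congrFun hF 2
    have e3 := congrFun hF 3
    simp [hostVirusField] at e0 e1 e2 e3
    have h3 : (1 - q) * D * p 0 * p 3 = (r + v) * p 2 := by linarith
    have hKi : (m * v - (r + v)) * p 2 = mu2 * p 3 := by linarith
    have hK : 0 < m * v - (r + v) := by
      by_contra hcon
      push_neg at hcon
      nlinarith [mul_pos hmu2 hw, hKi, mul_nonneg (neg_nonneg.2 hcon) hi.le]
    have hww : (m * v - (r + v)) * (1 - q) * D * p 0 * p 3 = mu2 * (r + v) * p 3 := by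
      linear_combination (m * v - (r + v)) * h3 + (r + v) * hKi
    have key : (m * v - (r + v)) * (1 - q) * D * p 0 = mu2 * (r + v) :=
      mul_right_cancel₀ (ne_of_gt hw) hww
    have hsd : sig * p 1 ≤ q * D * p 0 * p 3 := by
      have : 0 ≤ kap * mu * p 1 := mul_nonneg (mul_nonneg hkap hmu.le) hd.le
      linarith
    have hri : r * p 2 < (1 - q) * D * p 0 * p 3 := by
      have : 0 < v * p 2 := mul_pos hv hi
      linarith
    have h5 : 0 < p 0 * (lam - mu - C * p 0) := by
      nlinarith [e0, hsd, hri, mul_pos (mul_pos hC ha) hd, mul_pos (mul_pos hC ha) hi]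
    have hCa : C * p 0 < lam - mu := by
      by_contra hcon
      push_neg at hcon
      nlinarith [mul_nonneg ha.le (by linarith : (0:ℝ) ≤ C * p 0 - (lam - mu))]
    have hlt : p 0 < (lam - mu) / C := (lt_div_iff₀ hC).mpr (by linarith)
    calc mu2 * (r + v) = (m * v - (r + v)) * (1 - q) * D * p 0 := key.symm
      _ < (m * v - (r + v)) * (1 - q) * D * ((lam - mu) / C) := by
          apply mul_lt_mul_of_pos_left hlt
          positivity
  · intro h
    have hN : 0 < (lam - mu) / C := div_pos hLm hC
    have hK : 0 < m * v - (r + v) := by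
      by_contra hcon
      push_neg at hcon
      have h1 : (m * v - (r + v)) * ((1 - q) * D * ((lam - mu) / C)) ≤ 0 :=
        mul_nonpos_of_nonpos_of_nonneg hcon (by positivity)
      nlinarith [mul_pos hmu2 hrv]
    have hKqD : 0 < (m * v - (r + v)) * (1 - q) * D := by positivity
    set a : ℝ := mu2 * (r + v) / ((m * v - (r + v)) * (1 - q) * D) with ha_def
    have ha : 0 < a := by
      rw [ha_def]; exact div_pos (by positivity) hKqD
    have key : (m * v - (r + v)) * (1 - q) * D * a = mu2 * (r + v) := by
      rw [ha_def]
      field_simp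
    have hlt : a < (lam - mu) / C := by
      rw [← key] at h
      exact lt_of_mul_lt_mul_left h hKqD.le
    have hCa : C * a < lam - mu := by
      rwa [lt_div_iff₀ hC, mul_comm] at hlt
    set α : ℝ := q * D * a / (kap * mu + sig) with hα_def
    set β : ℝ := (1 - q) * D * a / (r + v) with hβ_def
    have hα : 0 < α := by rw [hα_def]; positivity
    have hβ : 0 < β := by rw [hβ_def]; positivity
    have hαeq : (kap * mu + sig) * α = q * D * a := by
      rw [hα_def]; field_simp
    have hβeq : (r + v) * β = (1 - q) * D * a := by
      rw [hβ_def]; field_simp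
    have hsα : sig * α ≤ q * D * a := by
      nlinarith [mul_nonneg (mul_nonneg hkap hmu.le) hα.le]
    have hrβ : r * β < (1 - q) * D * a := by
      nlinarith [mul_pos hv hβ]
    set E : ℝ := a * C * (α + β) + a * D - sig * α - r * β with hE_def
    have hE : 0 < E := by
      rw [hE_def]
      nlinarith [mul_pos (mul_pos ha hC) (add_pos hα hβ)]
    set n2 : ℝ := a * (lam - mu - C * a) / E with hn2_def
    have hn2 : 0 < n2 := by
      rw [hn2_def]
      apply div_pos _ hE
      apply mul_pos ha
      linarith
    have hn2E : n2 * E = a * (lam - mu - C * a) := by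
      rw [hn2_def, div_mul_cancel₀ _ hE.ne']
    clear_value n2 E β α a
    refine ⟨![a, α * n2, β * n2, n2], ?_, ?_⟩
    · intro i
      fin_cases i <;> simp <;>
        first
          | exact ha
          | exact mul_pos hα hn2
          | exact mul_pos hβ hn2
          | exact hn2
    · funext i
      fin_cases i <;> simp [hostVirusField]
      · linear_combination -hn2E + n2 * hE_def
      · linear_combination -n2 * hαeq
      · linear_combination -n2 * hβeq
      · have hβ3 : m * v * β = (1 - q) * D * a + mu2 := by
          have h4 : (r + v) * (m * v * β) = (r + v) * ((1 - q) * D * a + mu2) := by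
            linear_combination m * v * hβeq + key
          exact mul_left_cancel₀ hrv.ne' h4
        linear_combination n2 * hβ3
end

section
/- Assume λ₁ > μ₁ and the coexistence condition. Then F has exactly one zero (n₁ₐ, n₁d, n₁ᵢ, n₂) in (0,∞)⁴, and every zero of F in (0,∞)⁴ satisfies n₁ₐ = μ₂(r+v)/((1−q)D(mv−(r+v))), n₁d = qDn₁ₐn₂/(κμ₁+σ) and n₁ᵢ = (1−q)Dn₁ₐn₂/(r+v). -/
set_option maxHeartbeats 1000000 in
theorem coexistence_equilibrium_unique
    (lam mu C D q kap sig r v mu2 m : ℝ)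
    (hmu : 0 < mu) (hlm : mu < lam) (hC : 0 < C) (hD : 0 < D)
    (hq0 : 0 < q) (hq1 : q < 1) (hkap : 0 ≤ kap) (hsig : 0 < sig)
    (hr : 0 < r) (hv : 0 < v) (hmu2 : 0 < mu2) (hm : 0 < m)
    (hcoex : (m * v - (r + v)) * (1 - q) * D * ((lam - mu) / C) > mu2 * (r + v)) :
    (∃! p : Fin 4 → ℝ,
        (∀ i, 0 < p i) ∧ hostVirusField lam mu C D q kap sig r v mu2 m p = 0) ∧
    (∀ p : Fin 4 → ℝ, (∀ i, 0 < p i) →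
        hostVirusField lam mu C D q kap sig r v mu2 m p = 0 →
        p 0 = mu2 * (r + v) / ((1 - q) * D * (m * v - (r + v))) ∧
        p 1 = q * D * p 0 * p 3 / (kap * mu + sig) ∧
        p 2 = (1 - q) * D * p 0 * p 3 / (r + v)) := by
  have hq1' : (0:ℝ) < 1 - q := by linarith
  have hrv : (0:ℝ) < r + v := by linarith
  have hks : (0:ℝ) < kap * mu + sig := by nlinarith [mul_nonneg hkap hmu.le]
  have hbar : (0:ℝ) < (lam - mu) / C := div_pos (by linarith) hC
  have hmv : (0:ℝ) < m * v - (r + v) := by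
    nlinarith [mul_pos hmu2 hrv, mul_pos (mul_pos hq1' hD) hbar]
  have hden : (0:ℝ) < (1 - q) * D * (m * v - (r + v)) :=
    mul_pos (mul_pos hq1' hD) hmv
  set N0 : ℝ := mu2 * (r + v) / ((1 - q) * D * (m * v - (r + v))) with hN0def
  have hN0 : 0 < N0 := div_pos (mul_pos hmu2 hrv) hden
  have hN0mul : N0 * ((1 - q) * D * (m * v - (r + v))) = mu2 * (r + v) := by
    rw [hN0def]; exact div_mul_cancel₀ _ hden.ne'
  have hClt : C * N0 < lam - mu := by
    have h3 := mul_lt_mul_of_pos_right hcoex hC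
    have h4 : (m * v - (r + v)) * (1 - q) * D * ((lam - mu) / C) * C
        = (lam - mu) * ((1 - q) * D * (m * v - (r + v))) := by
      field_simp
    nlinarith [h3, h4, hN0mul, mul_pos hden hN0]
  set A : ℝ := q * D * N0 / (kap * mu + sig) with hAdef
  set B : ℝ := (1 - q) * D * N0 / (r + v) with hBdef
  have hA : 0 < A := div_pos (mul_pos (mul_pos hq0 hD) hN0) hks
  have hB : 0 < B := div_pos (mul_pos (mul_pos hq1' hD) hN0) hrv
  have hAk : A * (kap * mu + sig) = q * D * N0 := by
    rw [hAdef]; exact div_mul_cancel₀ _ hks.ne'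
  have hBk : B * (r + v) = (1 - q) * D * N0 := by
    rw [hBdef]; exact div_mul_cancel₀ _ hrv.ne'
  set K : ℝ := C * N0 * (A + B) + D * N0 - sig * A - r * B with hKdef
  set T : ℝ := N0 * (lam - mu - C * N0) with hTdef
  have hT : 0 < T := by rw [hTdef]; exact mul_pos hN0 (by linarith)
  have h1 : sig * A ≤ q * D * N0 := by
    nlinarith [hAk, mul_nonneg (mul_nonneg hkap hmu.le) hA.le]
  have h2 : r * B < (1 - q) * D * N0 := by
    nlinarith [hBk, mul_pos hv hB]
  have hK : 0 < K := by
    rw [hKdef]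
    nlinarith [h1, h2, mul_pos (mul_pos hC hN0) (add_pos hA hB)]
  set N3 : ℝ := T / K with hN3def
  have hN3 : 0 < N3 := div_pos hT hK
  have hN3K : N3 * K = T := by rw [hN3def]; exact div_mul_cancel₀ _ hK.ne'
  have hB3 : m * v * B - (1 - q) * D * N0 - mu2 = 0 := by
    have h0 : (m * v * B - (1 - q) * D * N0 - mu2) * (r + v) = 0 := by
      linear_combination m * v * hBk + hN0mul
    exact (mul_eq_zero.mp h0).resolve_right hrv.ne'
  -- the witness
  set w : Fin 4 → ℝ := ![N0, A * N3, B * N3, N3] with hwdef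
  have hw0 : w 0 = N0 := rfl
  have hw1 : w 1 = A * N3 := rfl
  have hw2 : w 2 = B * N3 := rfl
  have hw3 : w 3 = N3 := rfl
  have hwpos : ∀ i, 0 < w i := by
    intro i
    fin_cases i
    · exact hN0
    · exact mul_pos hA hN3
    · exact mul_pos hB hN3
    · exact hN3
  have hwzero : hostVirusField lam mu C D q kap sig r v mu2 m w = 0 := by
    funext i
    fin_cases i
    · show w 0 * (lam - mu - C * (w 0 + w 1 + w 2) - D * w 3) + sig * w 1 + r * w 2 = 0
      rw [hw0, hw1, hw2, hw3]
      linear_combination (-1 : ℝ) * hN3K - hTdef + N3 * hKdef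
    · show q * D * w 0 * w 3 - (kap * mu + sig) * w 1 = 0
      rw [hw0, hw1, hw3]
      linear_combination (-N3) * hAk
    · show (1 - q) * D * w 0 * w 3 - (r + v) * w 2 = 0
      rw [hw0, hw2, hw3]
      linear_combination (-N3) * hBk
    · show m * v * w 2 - (1 - q) * D * w 0 * w 3 - mu2 * w 3 = 0
      rw [hw0, hw2, hw3]
      linear_combination N3 * hB3
  -- key facts for any positive zero
  have key : ∀ p : Fin 4 → ℝ, (∀ i, 0 < p i) →
      hostVirusField lam mu C D q kap sig r v mu2 m p = 0 →
      p 0 = N0 ∧ p 1 = A * p 3 ∧ p 2 = B * p 3 ∧ p 3 = N3 := by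
    intro p hp hz
    have e0 : p 0 * (lam - mu - C * (p 0 + p 1 + p 2) - D * p 3) + sig * p 1 + r * p 2 = 0 := by
      simpa [hostVirusField] using congrFun hz 0
    have e1 : q * D * p 0 * p 3 - (kap * mu + sig) * p 1 = 0 := by
      simpa [hostVirusField] using congrFun hz 1
    have e2 : (1 - q) * D * p 0 * p 3 - (r + v) * p 2 = 0 := by
      simpa [hostVirusField] using congrFun hz 2
    have e3 : m * v * p 2 - (1 - q) * D * p 0 * p 3 - mu2 * p 3 = 0 := by
      simpa [hostVirusField] using congrFun hz 3
    have h4 : (m * v - (r + v)) * p 2 = mu2 * p 3 := by linear_combination e3 + e2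
    have h5 : ((1 - q) * D * (m * v - (r + v)) * p 0) * p 3 = (mu2 * (r + v)) * p 3 := by
      linear_combination (m * v - (r + v)) * e2 + (r + v) * h4
    have h6 := mul_right_cancel₀ (hp 3).ne' h5
    have hp0 : p 0 = N0 := by
      rw [hN0def, eq_div_iff hden.ne']; linear_combination h6
    have hp1 : p 1 = A * p 3 := by
      refine mul_right_cancel₀ hks.ne' ?_
      linear_combination (-1 : ℝ) * e1 - p 3 * hAk + q * D * p 3 * hp0
    have hp2 : p 2 = B * p 3 := by
      refine mul_right_cancel₀ hrv.ne' ?_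
      linear_combination (-1 : ℝ) * e2 - p 3 * hBk + (1 - q) * D * p 3 * hp0
    refine ⟨hp0, hp1, hp2, ?_⟩
    rw [hp0, hp1, hp2] at e0
    have h7 : p 3 * K = T := by
      rw [hKdef, hTdef]; linear_combination (-1 : ℝ) * e0
    rw [hN3def, eq_div_iff hK.ne']; exact h7
  have huniq : ∀ p : Fin 4 → ℝ, (∀ i, 0 < p i) →
      hostVirusField lam mu C D q kap sig r v mu2 m p = 0 → p = w := by
    intro p hp hz
    obtain ⟨k0, k1, k2, k3⟩ := key p hp hz
    funext i
    fin_cases i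
    · show p 0 = w 0
      rw [hw0]; exact k0
    · show p 1 = w 1
      rw [hw1, k1, k3]
    · show p 2 = w 2
      rw [hw2, k2, k3]
    · show p 3 = w 3
      rw [hw3]; exact k3
  constructor
  · exact ⟨w, ⟨hwpos, hwzero⟩, fun p hp => huniq p hp.1 hp.2⟩
  · intro p hp hz
    obtain ⟨k0, k1, k2, k3⟩ := key p hp hz
    refine ⟨k0, ?_, ?_⟩
    · rw [k1, k0, hAdef]; ring
    · rw [k2, k0, hBdef]; ring
end

section
/- Assume λ₁ > μ₁ and the strict reverse coexistence inequality m v (1−q) D n̄₁ₐ < ((1−q)D n̄₁ₐ + μ₂)(r+v). Then every complex eigenvalue of the 4×4 real matrix A(n̄₁ₐ,0,0,0) with rows (−(λ₁−μ₁), σ − C n̄₁ₐ, r − C n̄₁ₐ, −D n̄₁ₐ), (0, −κμ₁−σ, 0, q D n̄₁ₐ), (0, 0, −(r+v), (1−q)D n̄₁ₐ), (0, 0, mv, −μ₂−(1−q)D n̄₁ₐ) has strictly negative real part. -/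
/-! The Jacobian is block upper triangular, with diagonal blocks `-(λ₁ - μ₁)`, `-κμ₁ - σ` and the
2×2 infection block, so its characteristic polynomial splits accordingly. The two scalar blocks are
negative; the infection block has negative trace and, by the reverse coexistence inequality,
positive determinant, so by the Routh–Hurwitz criterion for quadratics both of its eigenvalues lie
in the open left half-plane. -/

/-- `z : ℂ` is an eigenvalue of the real matrix `A` (i.e. of its complexification):
it is a root of the characteristic polynomial of `A` over `ℂ`. -/
noncomputable def IsEigOf {n : ℕ} (A : Matrix (Fin n) (Fin n) ℝ) (z : ℂ) : Prop :=
  ((A.map Complex.ofReal).charpoly).IsRoot z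

open Polynomial

theorem Matrix.charpoly_fin_four_of_blockTriangular {R : Type*} [CommRing R]
    (A : Matrix (Fin 4) (Fin 4) R)
    (h10 : A 1 0 = 0) (h20 : A 2 0 = 0) (h30 : A 3 0 = 0) (h21 : A 2 1 = 0) (h31 : A 3 1 = 0) :
    A.charpoly = (X - C (A 0 0)) * (X - C (A 1 1)) *
      (X ^ 2 - C (A 2 2 + A 3 3) * X + C (A 2 2 * A 3 3 - A 2 3 * A 3 2)) := by
  simp [Matrix.charpoly, Matrix.det_succ_column_zero, Fin.sum_univ_succ, Matrix.charmatrix_apply,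
    Matrix.submatrix, Fin.succAbove, h10, h20, h30, h21, h31]
  ring

theorem Complex.re_neg_of_sq_sub_mul_add_eq_zero {t d : ℝ} (ht : t < 0) (hd : 0 < d) {z : ℂ}
    (h : z ^ 2 - t * z + d = 0) : z.re < 0 := by
  have hre := congrArg Complex.re h
  have him := congrArg Complex.im h
  simp only [pow_two, add_re, sub_re, mul_re, ofReal_re, ofReal_im, zero_re, add_im, sub_im,
    mul_im, zero_im] at hre him
  -- a non-real root has `re z = t / 2`; a real root `x ≥ 0` would make `x² - t x + d > 0`
  have : z.im * (2 * z.re - t) = 0 := by linear_combination him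
  rcases mul_eq_zero.mp this with hy | hx
  · nlinarith [sq_nonneg z.re]
  · linarith

theorem IsEigOf.re_neg_of_fin_four_blockTriangular {A : Matrix (Fin 4) (Fin 4) ℝ} {z : ℂ}
    (hz : IsEigOf A z)
    (h10 : A 1 0 = 0) (h20 : A 2 0 = 0) (h30 : A 3 0 = 0) (h21 : A 2 1 = 0) (h31 : A 3 1 = 0)
    (h00 : A 0 0 < 0) (h11 : A 1 1 < 0) (htr : A 2 2 + A 3 3 < 0)
    (hdet : 0 < A 2 2 * A 3 3 - A 2 3 * A 3 2) : z.re < 0 := by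
  rw [IsEigOf, Matrix.charpoly_fin_four_of_blockTriangular _ (by simp [h10]) (by simp [h20])
    (by simp [h30]) (by simp [h21]) (by simp [h31])] at hz
  simp only [IsRoot, eval_mul, mul_eq_zero, eval_sub, eval_X, eval_C] at hz
  rcases hz with (h0 | h1) | hblock
  · simpa [sub_eq_zero.mp h0] using h00
  · simpa [sub_eq_zero.mp h1] using h11
  · refine Complex.re_neg_of_sq_sub_mul_add_eq_zero htr hdet ?_
    simpa using hblock

theorem virus_free_equilibrium_stable_general
    (lam mu C D q kap sig r v mu2 m : ℝ)
    (hmu : 0 < mu) (hlm : mu < lam) (hC : 0 < C) (hD : 0 < D)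
    (hq1 : q < 1) (hkap : 0 ≤ kap) (hsig : 0 < sig)
    (hr : 0 < r) (hv : 0 < v) (hmu2 : 0 < mu2)
    (hrev : m * v * (1 - q) * D * ((lam - mu) / C)
        < ((1 - q) * D * ((lam - mu) / C) + mu2) * (r + v)) :
    ∀ z : ℂ,
      IsEigOf (!![-(lam - mu), sig - C * ((lam - mu) / C), r - C * ((lam - mu) / C),
                    -(D * ((lam - mu) / C));
                  0, -(kap * mu) - sig, 0, q * D * ((lam - mu) / C);
                  0, 0, -(r + v), (1 - q) * D * ((lam - mu) / C);
                  0, 0, m * v, -mu2 - (1 - q) * D * ((lam - mu) / C)]) z →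
      z.re < 0 := by
  intro z hz
  have hinfect : 0 < (1 - q) * D * ((lam - mu) / C) :=
    mul_pos (mul_pos (by linarith) hD) (div_pos (by linarith) hC)
  refine hz.re_neg_of_fin_four_blockTriangular rfl rfl rfl rfl rfl ?_ ?_ ?_ ?_ <;>
    simp only [Matrix.of_apply, Matrix.cons_val, Matrix.cons_val_zero, Matrix.cons_val_one]
  · linarith
  · linarith [mul_nonneg hkap hmu.le]
  · linarith
  · linear_combination hrev

theorem virus_free_equilibrium_stable
    (lam mu C D q kap sig r v mu2 m : ℝ)
    (hmu : 0 < mu) (hlm : mu < lam) (hC : 0 < C) (hD : 0 < D)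
    (hq0 : 0 < q) (hq1 : q < 1) (hkap : 0 ≤ kap) (hsig : 0 < sig)
    (hr : 0 < r) (hv : 0 < v) (hmu2 : 0 < mu2) (hm : 0 < m)
    (hrev : m * v * (1 - q) * D * ((lam - mu) / C)
        < ((1 - q) * D * ((lam - mu) / C) + mu2) * (r + v)) :
    ∀ z : ℂ,
      IsEigOf (!![-(lam - mu), sig - C * ((lam - mu) / C), r - C * ((lam - mu) / C),
                    -(D * ((lam - mu) / C));
                  0, -(kap * mu) - sig, 0, q * D * ((lam - mu) / C);
                  0, 0, -(r + v), (1 - q) * D * ((lam - mu) / C);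
                  0, 0, m * v, -mu2 - (1 - q) * D * ((lam - mu) / C)]) z →
      z.re < 0 :=
  virus_free_equilibrium_stable_general lam mu C D q kap sig r v mu2 m hmu hlm hC hD hq1 hkap hsig
    hr hv hmu2 hrev
end

section
/- Assume λ₁ > μ₁ and the coexistence condition (m v − (r+v))·(1−q)·D·n̄₁ₐ > μ₂·(r+v). Then the 4×4 real matrix A(n̄₁ₐ,0,0,0) with rows (−(λ₁−μ₁), σ − C n̄₁ₐ, r − C n̄₁ₐ, −D n̄₁ₐ), (0, −κμ₁−σ, 0, q D n̄₁ₐ), (0, 0, −(r+v), (1−q)D n̄₁ₐ), (0, 0, mv, −μ₂−(1−q)D n̄₁ₐ) has an eigenvalue with strictly positive real part; hence the virus-free equilibrium is linearly unstable. -/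
open Matrix

theorem Matrix.isRoot_charpoly_of_vecMul_eq_smul {n K : Type*} [Fintype n] [DecidableEq n]
    [CommRing K] [IsDomain K] {M : Matrix n n K} {z : K} {y : n → K} (hy : y ≠ 0)
    (h : y ᵥ* M = z • y) : M.charpoly.IsRoot z := by
  rw [Polynomial.IsRoot, eval_charpoly, ← exists_vecMul_eq_zero_iff]
  refine ⟨y, hy, ?_⟩
  rw [vecMul_sub, h, scalar_apply, sub_eq_zero]
  ext i
  simp [vecMul_diagonal, mul_comm]

theorem exists_pos_add_mul_add_eq {a b c : ℝ} (h : a * b < c) :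
    ∃ x : ℝ, 0 < x ∧ (x + a) * (x + b) = c := by
  set s := √((a - b) ^ 2 + 4 * c)
  have hs : s ^ 2 = (a - b) ^ 2 + 4 * c := Real.sq_sqrt (by nlinarith [sq_nonneg (a + b)])
  have hs_gt : a + b < s := by nlinarith [Real.sqrt_nonneg ((a - b) ^ 2 + 4 * c)]
  exact ⟨(s - (a + b)) / 2, by linarith, by linear_combination hs / 4⟩

theorem virus_free_equilibrium_unstable_general
    (lam mu C D q kap sig r v mu2 m : ℝ)
    (hv : 0 < v) (hm : 0 < m)
    (hcoex : (m * v - (r + v)) * (1 - q) * D * ((lam - mu) / C) > mu2 * (r + v)) :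
    ∃ z : ℂ,
      IsEigOf (!![-(lam - mu), sig - C * ((lam - mu) / C), r - C * ((lam - mu) / C),
                    -(D * ((lam - mu) / C));
                  0, -(kap * mu) - sig, 0, q * D * ((lam - mu) / C);
                  0, 0, -(r + v), (1 - q) * D * ((lam - mu) / C);
                  0, 0, m * v, -mu2 - (1 - q) * D * ((lam - mu) / C)]) z ∧
      0 < z.re := by
  set e := (1 - q) * D * ((lam - mu) / C)
  have hdet : (r + v) * (mu2 + e) < m * v * e := by linear_combination hcoex
  obtain ⟨x, hx, hroot⟩ := exists_pos_add_mul_add_eq hdet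
  have hroot' : ((x : ℂ) + (r + v)) * (x + (mu2 + e)) = m * v * e := by exact_mod_cast hroot
  set w : Fin 4 → ℂ := ![0, 0, m * v, x + (r + v)]
  have hw : w ≠ 0 := fun h ↦ by simpa [w, hm.ne', hv.ne'] using congrFun h 2
  refine ⟨x, isRoot_charpoly_of_vecMul_eq_smul hw ?_, by simpa using hx⟩
  ext i
  fin_cases i <;> simp [w, vecMul, dotProduct, Fin.sum_univ_four]
  · ring
  · linear_combination -hroot'

theorem virus_free_equilibrium_unstable
    (lam mu C D q kap sig r v mu2 m : ℝ)
    (hmu : 0 < mu) (hlm : mu < lam) (hC : 0 < C) (hD : 0 < D)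
    (hq0 : 0 < q) (hq1 : q < 1) (hkap : 0 ≤ kap) (hsig : 0 < sig)
    (hr : 0 < r) (hv : 0 < v) (hmu2 : 0 < mu2) (hm : 0 < m)
    (hcoex : (m * v - (r + v)) * (1 - q) * D * ((lam - mu) / C) > mu2 * (r + v)) :
    ∃ z : ℂ,
      IsEigOf (!![-(lam - mu), sig - C * ((lam - mu) / C), r - C * ((lam - mu) / C),
                    -(D * ((lam - mu) / C));
                  0, -(kap * mu) - sig, 0, q * D * ((lam - mu) / C);
                  0, 0, -(r + v), (1 - q) * D * ((lam - mu) / C);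
                  0, 0, m * v, -mu2 - (1 - q) * D * ((lam - mu) / C)]) z ∧
      0 < z.re :=
  virus_free_equilibrium_unstable_general lam mu C D q kap sig r v mu2 m hv hm hcoex
end

section
/- Assume λ₁ > μ₁ and the coexistence condition, and let (n₁ₐ, n₁d, n₁ᵢ, n₂) be any zero of F in (0,∞)⁴. Then the Jacobian matrix A of F at this point, i.e. the 4×4 matrix with rows (λ₁−μ₁−C(2n₁ₐ+n₁d+n₁ᵢ)−Dn₂, σ−Cn₁ₐ, r−Cn₁ₐ, −Dn₁ₐ), (qDn₂, −κμ₁−σ, 0, qDn₁ₐ), ((1−q)Dn₂, 0, −(r+v), (1−q)Dn₁ₐ), (−(1−q)Dn₂, 0, mv, −(1−q)Dn₁ₐ−μ₂), has strictly positive determinant and strictly negative trace. -/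
/-- The Jacobian matrix of the host–virus vector field at a point `x`. -/
noncomputable def hostVirusJacobian (lam mu C D q kap sig r v mu2 m : ℝ)
    (x : Fin 4 → ℝ) : Matrix (Fin 4) (Fin 4) ℝ :=
  !![lam - mu - C * (2 * x 0 + x 1 + x 2) - D * x 3, sig - C * x 0, r - C * x 0, -(D * x 0);
     q * D * x 3, -(kap * mu) - sig, 0, q * D * x 0;
     (1 - q) * D * x 3, 0, -(r + v), (1 - q) * D * x 0;
     -((1 - q) * D * x 3), 0, m * v, -((1 - q) * D * x 0) - mu2]


private lemma trace_fin_four' (A : Matrix (Fin 4) (Fin 4) ℝ) :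
    A.trace = A 0 0 + A 1 1 + A 2 2 + A 3 3 := by
  simp [Matrix.trace, Matrix.diag, Fin.sum_univ_four]

private lemma det_fin_four' (A : Matrix (Fin 4) (Fin 4) ℝ) :
    A.det =
      A 0 0 * (A 1 1 * A 2 2 * A 3 3 - A 1 1 * A 2 3 * A 3 2 - A 1 2 * A 2 1 * A 3 3
        + A 1 2 * A 2 3 * A 3 1 + A 1 3 * A 2 1 * A 3 2 - A 1 3 * A 2 2 * A 3 1)
      - A 0 1 * (A 1 0 * A 2 2 * A 3 3 - A 1 0 * A 2 3 * A 3 2 - A 1 2 * A 2 0 * A 3 3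
        + A 1 2 * A 2 3 * A 3 0 + A 1 3 * A 2 0 * A 3 2 - A 1 3 * A 2 2 * A 3 0)
      + A 0 2 * (A 1 0 * A 2 1 * A 3 3 - A 1 0 * A 2 3 * A 3 1 - A 1 1 * A 2 0 * A 3 3
        + A 1 1 * A 2 3 * A 3 0 + A 1 3 * A 2 0 * A 3 1 - A 1 3 * A 2 1 * A 3 0)
      - A 0 3 * (A 1 0 * A 2 1 * A 3 2 - A 1 0 * A 2 2 * A 3 1 - A 1 1 * A 2 0 * A 3 2
        + A 1 1 * A 2 2 * A 3 0 + A 1 2 * A 2 0 * A 3 1 - A 1 2 * A 2 1 * A 3 0) := by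
  simp only [Matrix.det_succ_row_zero, ← Nat.not_even_iff_odd, Matrix.submatrix_apply,
    Fin.succ_zero_eq_one, Matrix.submatrix_submatrix, Matrix.det_unique, Fin.default_eq_zero,
    Function.comp_apply, Fin.succ_one_eq_two, Fin.sum_univ_succ, Fin.val_zero,
    Fin.zero_succAbove, Finset.univ_unique, Fin.val_succ, Fin.val_eq_zero,
    Fin.succ_succAbove_zero, Finset.sum_singleton, Fin.succ_succAbove_one, Even.add_self]
  simp only [show (Fin.succ 2 : Fin 4) = 3 by decide, show Fin.succAbove 2 2 = (3 : Fin 4) by decide,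
    show Fin.succAbove 1 2 = (3 : Fin 4) by decide, show Fin.castSucc 2 = (2 : Fin 4) by decide, show Fin.succAbove 3 2 = (2 : Fin 4) by decide, show Fin.succAbove 3 1 = (1 : Fin 4) by decide, show Fin.succAbove 3 0 = (0 : Fin 4) by decide]
  ring

set_option maxHeartbeats 1600000 in
theorem jacobian_det_pos_trace_neg_at_coexistence
    (lam mu C D q kap sig r v mu2 m : ℝ)
    (hmu : 0 < mu) (hlm : mu < lam) (hC : 0 < C) (hD : 0 < D)
    (hq0 : 0 < q) (hq1 : q < 1) (hkap : 0 ≤ kap) (hsig : 0 < sig)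
    (hr : 0 < r) (hv : 0 < v) (hmu2 : 0 < mu2) (hm : 0 < m)
    (hcoex : (m * v - (r + v)) * (1 - q) * D * ((lam - mu) / C) > mu2 * (r + v))
    (p : Fin 4 → ℝ) (hp : ∀ i, 0 < p i)
    (hzero : hostVirusField lam mu C D q kap sig r v mu2 m p = 0) :
    0 < (hostVirusJacobian lam mu C D q kap sig r v mu2 m p).det ∧
    (hostVirusJacobian lam mu C D q kap sig r v mu2 m p).trace < 0 := by
  have ha := hp 0
  have hd := hp 1
  have hi := hp 2
  have hw := hp 3
  set a := p 0 with haa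
  set d := p 1 with hdd
  set i := p 2 with hii
  set w := p 3 with hww
  have e0 := congrFun hzero 0
  have e1 := congrFun hzero 1
  have e2 := congrFun hzero 2
  have e3 := congrFun hzero 3
  simp only [hostVirusField, Matrix.cons_val_zero, Matrix.cons_val_one, Matrix.head_cons,
    Matrix.cons_val_two, Matrix.tail_cons, Matrix.cons_val_three, Pi.zero_apply] at e0 e1 e2 e3
  simp only [← haa, ← hdd, ← hii, ← hww] at e0 e1 e2 e3
  have hK : (0:ℝ) < kap * mu + sig := by positivity
  have hR : (0:ℝ) < r + v := by positivity
  have h1q : (0:ℝ) < 1 - q := by linarith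
  have hlmC : 0 < (lam - mu) / C := div_pos (by linarith) hC
  have hM : 0 < m * v - (r + v) := by
    rcases lt_or_ge 0 (m * v - (r + v)) with h | h
    · exact h
    · exfalso
      have hX : 0 < (1 - q) * D * ((lam - mu) / C) := by positivity
      nlinarith [mul_pos hmu2 hR, mul_nonneg (neg_nonneg.mpr h) hX.le]
  have hE3 : (1 - q) * D * a * w = (r + v) * i := by linarith
  have hE4 : (m * v - (r + v)) * i = mu2 * w := by linarith
  have haval : (1 - q) * D * a * (m * v - (r + v)) = mu2 * (r + v) := by
    have h : ((1 - q) * D * a * (m * v - (r + v))) * w = (mu2 * (r + v)) * w := by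
      linear_combination (m * v - (r + v)) * hE3 + (r + v) * hE4
    exact mul_right_cancel₀ (ne_of_gt hw) h
  have hkey : 0 < lam - mu - C * a := by
    have h2 : (m * v - (r + v)) * (1 - q) * D * ((lam - mu) / C)
        > (1 - q) * D * a * (m * v - (r + v)) := by rw [haval]; exact hcoex
    have h3 : a < (lam - mu) / C := by
      by_contra h
      push_neg at h
      have hP : 0 < (m * v - (r + v)) * ((1 - q) * D) := by positivity
      nlinarith [mul_nonneg hP.le (sub_nonneg.mpr h)]
    have h4 : a * C < lam - mu := (lt_div_iff₀ hC).mp h3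
    nlinarith
  have hane : a ≠ 0 := ne_of_gt ha
  have hKne : (kap * mu + sig) ≠ 0 := ne_of_gt hK
  have hRne : (r + v) ≠ 0 := ne_of_gt hR
  have hd_eq : d = q * D * a * w / (kap * mu + sig) := by
    rw [eq_div_iff hKne]; linarith
  have hi_eq : i = (1 - q) * D * a * w / (r + v) := by
    rw [eq_div_iff hRne]; linarith
  have hmu2_eq : mu2 = (1 - q) * D * a * (m * v - (r + v)) / (r + v) := by
    rw [eq_div_iff hRne]; linarith [haval]
  have hS : (sig * d + r * i) / a = -(lam - mu - C * (a + d + i) - D * w) := by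
    rw [div_eq_iff hane]
    linear_combination e0
  have hlam_eq : lam = mu + C * (a + d + i) + D * w - (sig * d + r * i) / a := by
    rw [hS]; ring
  constructor
  · have hdet : (hostVirusJacobian lam mu C D q kap sig r v mu2 m p).det
        = (kap * mu + sig) * (r + v) * mu2 * (lam - mu - C * a) := by
      rw [hostVirusJacobian, det_fin_four' ]
      simp only [Matrix.of_apply, Matrix.cons_val', Matrix.cons_val_zero, Matrix.cons_val_one,
        Matrix.head_cons, Matrix.empty_val', Matrix.cons_val_fin_one, Matrix.head_fin_const,
        Matrix.cons_val_two, Matrix.tail_cons, Matrix.cons_val_three, Matrix.cons_val_succ]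
      rw [hlam_eq, hmu2_eq, hd_eq, hi_eq]
      field_simp
      ring
    rw [hdet]
    positivity
  · rw [hostVirusJacobian, trace_fin_four' ]
    simp only [Matrix.of_apply, Matrix.cons_val', Matrix.cons_val_zero, Matrix.cons_val_one,
      Matrix.head_cons, Matrix.empty_val', Matrix.cons_val_fin_one, Matrix.head_fin_const,
      Matrix.cons_val_two, Matrix.tail_cons, Matrix.cons_val_three, Matrix.cons_val_succ]
    have h0 : lam - mu - C * (a + d + i) - D * w < 0 := by
      have heq : a * (lam - mu - C * (a + d + i) - D * w) = -(sig * d + r * i) := by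
        linarith
      nlinarith [mul_pos hsig hd, mul_pos hr hi]
    nlinarith [mul_pos hC ha, mul_pos (mul_pos h1q hD) ha]
end

section
/- Assume λ₁ > μ₁ and the coexistence condition. Let n : [0,∞) → ℝ⁴ be differentiable with n'(t) = F(n(t)) for all t ≥ 0 and n(0) ∈ (0,∞)⁴. Then there exists ϱ > 0 such that liminf_{t→∞} ‖n(t) − (n̄₁ₐ, 0, 0, 0)‖₁ ≥ ϱ, where ‖·‖₁ is the ℓ¹-norm on ℝ⁴ (the virus-free equilibrium is a uniform strong repeller). -/
/-!
Solutions stay positive (a coordinate can only decay exponentially while the others are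
nonnegative) and ultimately bounded. Persistence then rests on one principle: a quantity that
decays at most exponentially stays bounded away from zero if every long excursion below a fixed
level ends no lower than the quantity was shortly after the excursion began.

The active host persists: while it is scarce, the virus load `(α + 1) n₁ᵢ + n₂`, where
`α = m v / (r + v)`, decays; then the dormant cells die out and the host grows at rate
`(λ₁ - μ₁) / 2`. The virus persists: `W = α n₁ᵢ + n₂` satisfies
`W' = ((α - 1) (1 - q) D n₁ₐ - μ₂) n₂`, which is nonnegative once `n₁ₐ` exceeds
`μ₂ / ((α - 1) (1 - q) D)`, a level below `n̄₁ₐ` exactly by the coexistence condition. While `W`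
is small, the dormant cells die out and the host, being bounded below, climbs above that level,
after which `W` no longer decreases. Finally, the `ℓ¹` distance to `(n̄₁ₐ, 0, 0, 0)` is at least
`n₁ᵢ + n₂ ≥ W / α`.
-/

open Filter

open Set Real

section Comparison

variable {f f' : ℝ → ℝ} {a b : ℝ}

theorem le_of_hasDerivAt_nonneg (hab : a ≤ b) (hd : ∀ t ∈ Icc a b, HasDerivAt f (f' t) t)
    (h : ∀ t ∈ Icc a b, 0 ≤ f' t) : f a ≤ f b :=
  monotoneOn_of_hasDerivWithinAt_nonneg (convex_Icc a b)
    (fun t ht => (hd t ht).continuousAt.continuousWithinAt)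
    (fun t ht => (hd t (interior_subset ht)).hasDerivWithinAt)
    (fun t ht => h t (interior_subset ht)) (left_mem_Icc.2 hab) (right_mem_Icc.2 hab) hab

theorem mul_exp_le_of_hasDerivAt_ge_mul {g : ℝ} (hab : a ≤ b)
    (hd : ∀ t ∈ Icc a b, HasDerivAt f (f' t) t) (h : ∀ t ∈ Icc a b, g * f t ≤ f' t) :
    f a * exp (g * (b - a)) ≤ f b := by
  have he (t : ℝ) : HasDerivAt (fun s => exp (-g * s)) (exp (-g * t) * -g) t := by
    simpa using ((hasDerivAt_id t).const_mul (-g)).exp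
  have hmono : f a * exp (-g * a) ≤ f b * exp (-g * b) :=
    le_of_hasDerivAt_nonneg hab (fun t ht => (hd t ht).mul (he t)) fun t ht => by
      nlinarith [h t ht, exp_pos (-g * t)]
  calc f a * exp (g * (b - a)) = f a * exp (-g * a) * exp (g * b) := by
        rw [mul_assoc, ← exp_add]; ring_nf
    _ ≤ f b * exp (-g * b) * exp (g * b) := by gcongr
    _ = f b := by rw [mul_assoc, ← exp_add]; ring_nf; simp

theorem le_of_hasDerivAt_neg_of_eq {θ : ℝ} (hd : ∀ t ∈ Icc a b, HasDerivAt f (f' t) t)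
    (ha : f a ≤ θ) (hθ : ∀ t ∈ Ico a b, f t = θ → f' t < 0) : ∀ t ∈ Icc a b, f t ≤ θ :=
  image_le_of_deriv_right_lt_deriv_boundary (B := fun _ => θ) (B' := 0)
    (fun t ht => (hd t ht).continuousAt.continuousWithinAt)
    (fun t ht => (hd t (Ico_subset_Icc_self ht)).hasDerivWithinAt) ha
    (fun _ => hasDerivAt_const _ _) hθ

theorem le_of_hasDerivAt_le_neg {c θ T : ℝ} (hc : 0 < c)
    (hd : ∀ t ∈ Icc a b, HasDerivAt f (f' t) t) (hdec : ∀ t ∈ Icc a b, θ ≤ f t → f' t ≤ -c)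
    (hT : f a - θ ≤ c * T) : ∀ t ∈ Icc a b, a + T ≤ t → f t ≤ θ := by
  intro t ht htT
  by_cases hcross : ∃ s ∈ Icc a t, f s ≤ θ
  · obtain ⟨s, hs, hfs⟩ := hcross
    have hsub : Icc s b ⊆ Icc a b := Icc_subset_Icc hs.1 le_rfl
    refine le_of_hasDerivAt_neg_of_eq (fun u hu => hd u (hsub hu)) hfs
      (fun u hu hfu => ?_) t ⟨hs.2, ht.2⟩
    linarith [hdec u (hsub (Ico_subset_Icc_self hu)) hfu.ge]
  · push Not at hcross
    have hsub : Icc a t ⊆ Icc a b := Icc_subset_Icc le_rfl ht.2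
    have hlin : -f a - c * a ≤ -f t - c * t :=
      le_of_hasDerivAt_nonneg ht.1
        (fun s hs => (hd s (hsub hs)).neg.sub ((hasDerivAt_id s).const_mul c))
        (fun s hs => by linarith [hdec s (hsub hs) (hcross s hs).le])
    nlinarith

theorem le_of_hasDerivAt_ge_mul {g h h₀ : ℝ} (hg : 0 < g) (hh : 0 < h) (hh₀ : 0 < h₀)
    (hd : ∀ t ∈ Icc a b, HasDerivAt f (f' t) t) (hgrow : ∀ t ∈ Icc a b, f t ≤ h → g * f t ≤ f' t)
    (ha : h₀ ≤ f a) : ∀ t ∈ Icc a b, a + h / (h₀ * g) ≤ t → h ≤ f t := by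
  intro t ht htT
  obtain ⟨s, hs, hfs⟩ : ∃ s ∈ Icc a t, h ≤ f s := by
    by_contra! hbelow
    have hsub : Icc a t ⊆ Icc a b := Icc_subset_Icc le_rfl ht.2
    have hgron := mul_exp_le_of_hasDerivAt_ge_mul ht.1 (fun s hs => hd s (hsub hs))
      (fun s hs => hgrow s (hsub hs) (hbelow s hs).le)
    have hlin : h ≤ h₀ * (g * (t - a)) := by
      have := (div_le_iff₀ (mul_pos hh₀ hg)).1 (le_sub_iff_add_le'.2 htT)
      linarith
    have : h₀ * (g * (t - a)) < f a * exp (g * (t - a)) := by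
      nlinarith [add_one_le_exp (g * (t - a)), exp_pos (g * (t - a))]
    linarith [hbelow t ⟨ht.1, le_rfl⟩]
  have hsub : Icc s b ⊆ Icc a b := Icc_subset_Icc hs.1 le_rfl
  have := le_of_hasDerivAt_neg_of_eq (f := fun u => -f u) (θ := -h)
    (fun u hu => (hd u (hsub hu)).neg) (by linarith)
    (fun u hu hfu => by nlinarith [hgrow u (hsub (Ico_subset_Icc_self hu)) (by linarith)])
    t ⟨hs.2, ht.2⟩
  linarith

theorem exists_forall_le_of_lt {θ : ℝ} (hab : a ≤ b) (hf : ContinuousOn f (Icc a b))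
    (hb : f b < θ) : ∃ c ∈ Icc a b, min θ (f a) ≤ f c ∧ ∀ t ∈ Icc c b, f t ≤ θ := by
  set S := Icc a b ∩ f ⁻¹' Ici θ
  rcases S.eq_empty_or_nonempty with hS | hS
  · refine ⟨a, left_mem_Icc.2 hab, min_le_right _ _, fun t ht => ?_⟩
    by_contra! hlt
    exact hS.subset ⟨ht, hlt.le⟩
  have hSc : IsCompact S := isCompact_Icc.of_isClosed_subset
    (hf.preimage_isClosed_of_isClosed isClosed_Icc isClosed_Ici) inter_subset_left
  obtain ⟨c, ⟨hc, hfc⟩, hmax⟩ := hSc.exists_isGreatest hS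
  have hcb : c ≠ b := by rintro rfl; exact (lt_irrefl _ (hb.trans_le hfc))
  refine ⟨c, hc, (min_le_left _ _).trans hfc, ?_⟩
  have hclosed : IsClosed (Icc c b ∩ f ⁻¹' Iic θ) :=
    (hf.mono (Icc_subset_Icc hc.1 le_rfl)).preimage_isClosed_of_isClosed isClosed_Icc isClosed_Iic
  have hIoc : Ioc c b ⊆ Icc c b ∩ f ⁻¹' Iic θ := fun t ht => by
    refine ⟨Ioc_subset_Icc_self ht, show f t ≤ θ from ?_⟩
    by_contra! hlt
    exact (hmax ⟨⟨hc.1.trans ht.1.le, ht.2⟩, hlt.le⟩).not_gt ht.1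
  intro t ht
  rw [← closure_Ioc hcb] at ht
  exact (closure_minimal hIoc hclosed ht).2

theorem le_of_forall_excursion {K h μ T : ℝ} (hK : 0 ≤ K) (hT : 0 ≤ T) (hμ : 0 ≤ μ)
    (hμh : μ ≤ h) (hμ0 : μ ≤ f 0) (hd : ∀ t, 0 ≤ t → HasDerivAt f (f' t) t)
    (hdecay : ∀ t, 0 ≤ t → -K * f t ≤ f' t)
    (hexc : ∀ a b, 0 ≤ a → a + T ≤ b → μ ≤ f a → (∀ t ∈ Icc a b, f t ≤ h) →
      ∃ s ∈ Icc a (a + T), f s ≤ f b) :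
    ∀ t, 0 ≤ t → μ * exp (-K * T) ≤ f t := by
  intro t ht
  by_contra! hlt
  have hexp : exp (-K * T) ≤ 1 := exp_le_one_iff.2 (by nlinarith)
  obtain ⟨a, ha, hμa, hle⟩ := exists_forall_le_of_lt ht
    (fun s hs => (hd s hs.1).continuousAt.continuousWithinAt)
    (hlt.trans_le ((mul_le_of_le_one_right hμ hexp).trans hμh))
  replace hμa : μ ≤ f a := (le_min hμh hμ0).trans hμa
  obtain ⟨s, hs, hsT, hfs⟩ : ∃ s ∈ Icc a t, s ≤ a + T ∧ f s ≤ f t := by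
    by_cases hlong : a + T ≤ t
    · obtain ⟨s, hs, hfs⟩ := hexc a t ha.1 hlong hμa hle
      exact ⟨s, ⟨hs.1, hs.2.trans hlong⟩, hs.2, hfs⟩
    · exact ⟨t, ⟨ha.2, le_rfl⟩, (not_le.1 hlong).le, le_rfl⟩
  have hgron := mul_exp_le_of_hasDerivAt_ge_mul hs.1
    (fun u hu => hd u (ha.1.trans hu.1)) (fun u hu => hdecay u (ha.1.trans hu.1))
  have : μ * exp (-K * T) ≤ f a * exp (-K * (s - a)) :=
    mul_le_mul hμa (exp_le_exp.2 (by nlinarith [hs.1])) (exp_pos _).le (hμ.trans hμa)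
  linarith

end Comparison

theorem pos_of_hasDerivAt_ge_neg_mul {ι : Type*} [Finite ι] {x x' : ℝ → ι → ℝ} {K a b : ℝ}
    (hd : ∀ t ∈ Icc a b, ∀ i, HasDerivAt (fun s => x s i) (x' t i) t)
    (hK : ∀ t ∈ Icc a b, (∀ j, 0 ≤ x t j) → ∀ i, -K * x t i ≤ x' t i)
    (ha : ∀ i, 0 < x a i) : ∀ t ∈ Icc a b, ∀ i, 0 < x t i := by
  by_contra! hbad
  set S := ⋃ i, Icc a b ∩ (fun s => x s i) ⁻¹' Iic 0
  have hS : S.Nonempty := by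
    obtain ⟨t, ht, i, hi⟩ := hbad
    exact ⟨t, mem_iUnion.2 ⟨i, ht, hi⟩⟩
  have hcont (i) : ContinuousOn (fun s => x s i) (Icc a b) :=
    fun t ht => (hd t ht i).continuousAt.continuousWithinAt
  have hSc : IsCompact S := isCompact_Icc.of_isClosed_subset
    (isClosed_iUnion_of_finite fun i =>
      (hcont i).preimage_isClosed_of_isClosed isClosed_Icc isClosed_Iic)
    (iUnion_subset fun i => inter_subset_left)
  obtain ⟨τ, hτS, hτmin⟩ := hSc.exists_isLeast hS
  obtain ⟨i₀, hτ, hxτ : x τ i₀ ≤ 0⟩ := mem_iUnion.1 hτS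
  have haτ : a ≠ τ := by rintro rfl; exact (ha i₀).not_ge hxτ
  have hbefore : ∀ t ∈ Ico a τ, ∀ i, 0 < x t i := fun t ht i => by
    by_contra! hle
    have htS : t ∈ S := mem_iUnion.2 ⟨i, ⟨ht.1, ht.2.le.trans hτ.2⟩, hle⟩
    exact (hτmin htS).not_gt ht.2
  have hsub : Icc a τ ⊆ Icc a b := Icc_subset_Icc le_rfl hτ.2
  have hnonneg : ∀ t ∈ Icc a τ, ∀ i, 0 ≤ x t i := fun t ht i => by
    have hclosed : IsClosed (Icc a τ ∩ (fun s => x s i) ⁻¹' Ici 0) :=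
      ((hcont i).mono hsub).preimage_isClosed_of_isClosed isClosed_Icc isClosed_Ici
    rw [← closure_Ico haτ] at ht
    have hIco : Ico a τ ⊆ Icc a τ ∩ (fun s => x s i) ⁻¹' Ici 0 :=
      fun s hs => ⟨Ico_subset_Icc_self hs, (hbefore s hs i).le⟩
    exact (closure_minimal hIco hclosed ht).2
  have hgron := mul_exp_le_of_hasDerivAt_ge_mul hτ.1 (fun t ht => hd t (hsub ht) i₀)
    (fun t ht => hK t (hsub ht) (hnonneg t ht) i₀)
  nlinarith [ha i₀, exp_pos (-K * (τ - a))]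

namespace HostVirus

variable {lam mu C D q kap sig r v mu2 m : ℝ}

local notation "𝔽" => hostVirusField lam mu C D q kap sig r v mu2 m

section Field

variable (x : Fin 4 → ℝ)

lemma hostVirusField_apply_zero :
    𝔽 x 0 = x 0 * (lam - mu - C * (x 0 + x 1 + x 2) - D * x 3) + sig * x 1 + r * x 2 := rfl

lemma hostVirusField_apply_one : 𝔽 x 1 = q * D * x 0 * x 3 - (kap * mu + sig) * x 1 := rfl

lemma hostVirusField_apply_two : 𝔽 x 2 = (1 - q) * D * x 0 * x 3 - (r + v) * x 2 := rfl

lemma hostVirusField_apply_three :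
    𝔽 x 3 = m * v * x 2 - (1 - q) * D * x 0 * x 3 - mu2 * x 3 := rfl

lemma hostVirusField_host_total :
    𝔽 x 0 + 𝔽 x 1 + 𝔽 x 2 =
      x 0 * (lam - mu - C * (x 0 + x 1 + x 2)) - kap * mu * x 1 - v * x 2 := by
  simp only [hostVirusField_apply_zero, hostVirusField_apply_one, hostVirusField_apply_two]; ring

lemma hostVirusField_virus_load (a : ℝ) :
    a * 𝔽 x 2 + 𝔽 x 3 =
      (m * v - a * (r + v)) * x 2 + ((a - 1) * ((1 - q) * D) * x 0 - mu2) * x 3 := by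
  simp only [hostVirusField_apply_two, hostVirusField_apply_three]; ring

lemma hostVirusField_virus_load_of_mul_eq {α : ℝ} (hα : α * (r + v) = m * v) :
    α * 𝔽 x 2 + 𝔽 x 3 = ((α - 1) * ((1 - q) * D) * x 0 - mu2) * x 3 := by
  rw [hostVirusField_virus_load, ← hα]; ring

variable {x}

lemma mul_le_hostVirusField_zero (hC : 0 ≤ C) (hD : 0 ≤ D) (hsig : 0 ≤ sig) (hr : 0 ≤ r)
    (hx : ∀ j, 0 ≤ x j) {s p : ℝ} (hs : x 0 + x 1 + x 2 ≤ s) (hp : x 3 ≤ p) :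
    (lam - mu - C * s - D * p) * x 0 ≤ 𝔽 x 0 := by
  have hbr : lam - mu - C * s - D * p ≤ lam - mu - C * (x 0 + x 1 + x 2) - D * x 3 := by
    nlinarith
  rw [hostVirusField_apply_zero]
  nlinarith [mul_le_mul_of_nonneg_right hbr (hx 0), mul_nonneg hsig (hx 1), mul_nonneg hr (hx 2)]

lemma exists_neg_mul_le_hostVirusField (hC : 0 ≤ C) (hD : 0 ≤ D) (hq0 : 0 ≤ q) (hq1 : q ≤ 1)
    (hsig : 0 ≤ sig) (hr : 0 ≤ r) (hmv : 0 ≤ m * v) (M : ℝ) :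
    ∃ K, ∀ x : Fin 4 → ℝ, (∀ j, 0 ≤ x j ∧ x j ≤ M) → ∀ i, -K * x i ≤ 𝔽 x i := by
  set k₀ := lam - mu - C * (3 * M) - D * M
  set k₃ := (1 - q) * D * M + mu2
  set K := |k₀| + |kap * mu + sig| + |r + v| + |k₃|
  refine ⟨K, fun x hx i => ?_⟩
  have hx0 (j) : 0 ≤ x j := (hx j).1
  have hK (k : ℝ) (hk : |k| ≤ K) (j : Fin 4) : -K * x j ≤ k * x j := by
    nlinarith [neg_abs_le k, hx0 j]
  have := abs_nonneg k₀
  have := abs_nonneg (kap * mu + sig)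
  have := abs_nonneg (r + v)
  have := abs_nonneg k₃
  have hqD : 0 ≤ (1 - q) * D := mul_nonneg (by linarith) hD
  match i with
  | 0 =>
    refine (hK k₀ (by linarith) 0).trans (mul_le_hostVirusField_zero hC hD hsig hr hx0 ?_ (hx 3).2)
    linarith [(hx 0).2, (hx 1).2, (hx 2).2]
  | 1 =>
    refine (hK (-(kap * mu + sig)) (by rw [abs_neg]; linarith) 1).trans ?_
    rw [hostVirusField_apply_one]
    nlinarith [mul_nonneg (mul_nonneg (mul_nonneg hq0 hD) (hx0 0)) (hx0 3)]
  | 2 =>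
    refine (hK (-(r + v)) (by rw [abs_neg]; linarith) 2).trans ?_
    rw [hostVirusField_apply_two]
    nlinarith [mul_nonneg (mul_nonneg hqD (hx0 0)) (hx0 3)]
  | 3 =>
    refine (hK (-k₃) (by rw [abs_neg]; linarith) 3).trans ?_
    rw [hostVirusField_apply_three]
    nlinarith [mul_le_mul_of_nonneg_right (mul_le_mul_of_nonneg_left (hx 0).2 hqD) (hx0 3),
      mul_nonneg hmv (hx0 2)]

end Field

theorem one_lt_of_coexistence (hlm : mu < lam) (hC : 0 < C) (hD : 0 < D) (hq1 : q < 1)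
    (hrv : 0 < r + v) (hmu2 : 0 < mu2)
    (hcoex : (m * v - (r + v)) * (1 - q) * D * ((lam - mu) / C) > mu2 * (r + v)) :
    1 < m * v / (r + v) := by
  have hpos : 0 < (m * v - (r + v)) * ((1 - q) * D * ((lam - mu) / C)) := by
    nlinarith [mul_pos hmu2 hrv]
  have := pos_of_mul_pos_left hpos (mul_pos (mul_pos (by linarith) hD)
    (div_pos (by linarith) hC)).le
  rw [one_lt_div hrv]
  linarith

theorem threshold_lt_of_coexistence (hk : 0 < (1 - q) * D) (hrv : 0 < r + v)
    (hcoex : (m * v - (r + v)) * (1 - q) * D * ((lam - mu) / C) > mu2 * (r + v))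
    (hα : 1 < m * v / (r + v)) :
    mu2 / ((m * v / (r + v) - 1) * ((1 - q) * D)) < (lam - mu) / C := by
  rw [div_lt_iff₀ (mul_pos (by linarith) hk)]
  refine lt_of_mul_lt_mul_right ?_ hrv.le
  calc mu2 * (r + v) < (m * v - (r + v)) * (1 - q) * D * ((lam - mu) / C) := hcoex
    _ = (lam - mu) / C * ((m * v / (r + v) - 1) * ((1 - q) * D)) * (r + v) := by
      field_simp

section Trajectory

variable {n : ℝ → Fin 4 → ℝ}

theorem solution_pos (hC : 0 ≤ C) (hD : 0 ≤ D) (hq0 : 0 ≤ q) (hq1 : q ≤ 1) (hsig : 0 ≤ sig)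
    (hr : 0 ≤ r) (hmv : 0 ≤ m * v) (hn : ∀ t, 0 ≤ t → HasDerivAt n (𝔽 (n t)) t)
    (h0 : ∀ i, 0 < n 0 i) : ∀ t, 0 ≤ t → ∀ i, 0 < n t i := by
  intro T hT
  obtain ⟨M, hM⟩ := isCompact_Icc.exists_bound_of_continuousOn
    (fun t (ht : t ∈ Icc 0 T) => (hn t ht.1).continuousAt.continuousWithinAt)
  obtain ⟨K, hK⟩ := exists_neg_mul_le_hostVirusField hC hD hq0 hq1 hsig hr hmv M
  refine pos_of_hasDerivAt_ge_neg_mul (x' := fun t => 𝔽 (n t))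
    (fun t ht => hasDerivAt_pi.1 (hn t ht.1)) (fun t ht hx => hK (n t) fun j => ⟨hx j, ?_⟩) h0
    T ⟨hT, le_rfl⟩
  exact (le_abs_self _).trans ((norm_le_pi_norm (n t) j).trans (hM t ht))

theorem exists_sum_le (hC : 0 < C) (hkm : 0 ≤ kap * mu) (hv : 0 ≤ v) (hmu2 : 0 < mu2)
    (hmv : 0 ≤ m * v) (hqD : 0 ≤ (1 - q) * D) (hn : ∀ t, 0 ≤ t → HasDerivAt n (𝔽 (n t)) t)
    (hpos : ∀ t, 0 ≤ t → ∀ i, 0 < n t i) :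
    ∃ B, ∀ t, 0 ≤ t → n t 0 + n t 1 + n t 2 + n t 3 ≤ B := by
  have hd (t) (ht : 0 ≤ t) (i : Fin 4) := hasDerivAt_pi.1 (hn t ht) i
  set N := max (n 0 0 + n 0 1 + n 0 2) ((lam - mu) / C + 1)
  have hN : ∀ t, 0 ≤ t → n t 0 + n t 1 + n t 2 ≤ N := by
    intro T hT
    refine le_of_hasDerivAt_neg_of_eq (f := fun t => n t 0 + n t 1 + n t 2)
      (fun t ht => ((hd t ht.1 0).add (hd t ht.1 1)).add (hd t ht.1 2)) (le_max_left _ _)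
      (fun t ht heq => ?_) T ⟨hT, le_rfl⟩
    have hCN : lam - mu - C * N < 0 := by
      have := mul_le_mul_of_nonneg_left (show (lam - mu) / C + 1 ≤ N from le_max_right _ _) hC.le
      rw [mul_add, mul_div_cancel₀ _ hC.ne'] at this
      linarith
    have hx := hpos t ht.1
    rw [hostVirusField_host_total, heq]
    nlinarith [mul_neg_of_pos_of_neg (hx 0) hCN, mul_nonneg hkm (hx 1).le, mul_nonneg hv (hx 2).le]
  set P := max (n 0 3) (m * v * N / mu2 + 1)
  have hP : ∀ t, 0 ≤ t → n t 3 ≤ P := by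
    intro T hT
    refine le_of_hasDerivAt_neg_of_eq (fun t ht => hd t ht.1 3) (le_max_left _ _)
      (fun t ht heq => ?_) T ⟨hT, le_rfl⟩
    have hμP : m * v * N + mu2 ≤ mu2 * P := by
      have := mul_le_mul_of_nonneg_left (show m * v * N / mu2 + 1 ≤ P from le_max_right _ _) hmu2.le
      rw [mul_add, mul_div_cancel₀ _ hmu2.ne'] at this
      linarith
    have hx := hpos t ht.1
    rw [hostVirusField_apply_three]
    have : mu2 * n t 3 = mu2 * P := by rw [heq]
    linarith [mul_le_mul_of_nonneg_left (show n t 2 ≤ N by linarith [hN t ht.1, hx 0, hx 1]) hmv,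
      mul_nonneg (mul_nonneg hqD (hx 0).le) (hx 3).le]
  exact ⟨N + P, fun t ht => add_le_add (hN t ht) (hP t ht)⟩

lemma nonneg_of_sum_le (hpos : ∀ t, 0 ≤ t → ∀ i, 0 < n t i) {B : ℝ}
    (hB : ∀ t, 0 ≤ t → n t 0 + n t 1 + n t 2 + n t 3 ≤ B) : 0 ≤ B := by
  have := hpos 0 le_rfl
  linarith [hB 0 le_rfl, this 0, this 1, this 2, this 3]

theorem dormant_le_of_virus_le (hsig : 0 < sig) (hkm : 0 ≤ kap * mu) (hqD : 0 ≤ q * D)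
    (hn : ∀ t, 0 ≤ t → HasDerivAt n (𝔽 (n t)) t) (hpos : ∀ t, 0 ≤ t → ∀ i, 0 < n t i) {B : ℝ}
    (hB : ∀ t, 0 ≤ t → n t 0 + n t 1 + n t 2 + n t 3 ≤ B) {a b w : ℝ} (ha : 0 ≤ a) (hw : 0 < w)
    (hP : ∀ t ∈ Icc a b, n t 3 ≤ w) :
    ∀ t ∈ Icc a b, a + B / (sig * w) ≤ t → n t 1 ≤ (q * D * B / sig + 1) * w := by
  have hB0 := nonneg_of_sum_le hpos hB
  have hlevel : sig * ((q * D * B / sig + 1) * w) = q * D * B * w + sig * w := by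
    field_simp
  refine le_of_hasDerivAt_le_neg (mul_pos hsig hw)
    (fun t ht => hasDerivAt_pi.1 (hn t (ha.trans ht.1)) 1) (fun t ht hle => ?_) ?_
  · have hx := hpos t (ha.trans ht.1)
    have hA : q * D * n t 0 * n t 3 ≤ q * D * B * w := by
      have := mul_le_mul (mul_le_mul_of_nonneg_left (show n t 0 ≤ B by
        linarith [hB t (ha.trans ht.1), hx 1, hx 2, hx 3]) hqD) (hP t ht) (hx 3).le
        (mul_nonneg hqD hB0)
      linarith
    rw [hostVirusField_apply_one]
    nlinarith [mul_le_mul_of_nonneg_left hle hsig.le, mul_nonneg hkm (hx 1).le]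
  · have hx := hpos a ha
    rw [mul_div_cancel₀ _ (mul_pos hsig hw).ne']
    linarith [hB a ha, hx 0, hx 2, hx 3,
      mul_nonneg (add_nonneg (div_nonneg (mul_nonneg hqD hB0) hsig.le) zero_le_one) hw.le]

theorem host_ge_of_virus_le (hC : 0 ≤ C) (hD : 0 ≤ D) (hq0 : 0 ≤ q) (hkm : 0 ≤ kap * mu)
    (hsig : 0 < sig) (hr : 0 ≤ r) (hn : ∀ t, 0 ≤ t → HasDerivAt n (𝔽 (n t)) t)
    (hpos : ∀ t, 0 ≤ t → ∀ i, 0 < n t i) {B : ℝ}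
    (hB : ∀ t, 0 ≤ t → n t 0 + n t 1 + n t 2 + n t 3 ≤ B) {a b w h g h₀ : ℝ} (ha : 0 ≤ a)
    (hw : 0 < w) (hvirus : ∀ t ∈ Icc a b, n t 2 ≤ w ∧ n t 3 ≤ w) (hg : 0 < g)
    (hgh : g ≤ lam - mu - C * (h + (q * D * B / sig + 1) * w + w) - D * w) (hh : 0 < h)
    (hh₀ : 0 < h₀) (hstart : h₀ ≤ n (a + B / (sig * w)) 0) :
    ∀ t ∈ Icc a b, a + B / (sig * w) + h / (h₀ * g) ≤ t → h ≤ n t 0 := by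
  have hT₁ : 0 ≤ B / (sig * w) := div_nonneg (nonneg_of_sum_le hpos hB) (mul_pos hsig hw).le
  have hsub : Icc (a + B / (sig * w)) b ⊆ Icc a b := Icc_subset_Icc (by linarith) le_rfl
  have hdormant := dormant_le_of_virus_le hsig hkm (mul_nonneg hq0 hD) hn hpos hB ha hw
    (fun t ht => (hvirus t ht).2)
  intro t ht htT
  refine le_of_hasDerivAt_ge_mul hg hh hh₀
    (fun s hs => hasDerivAt_pi.1 (hn s (ha.trans (hsub hs).1)) 0) (fun s hs hle => ?_) hstart
    t ⟨by linarith [div_nonneg hh.le (mul_pos hh₀ hg).le], ht.2⟩ htT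
  have hx := hpos s (ha.trans (hsub hs).1)
  have h1 := hdormant s (hsub hs) hs.1
  have h23 := hvirus s (hsub hs)
  have : (lam - mu - C * (h + (q * D * B / sig + 1) * w + w) - D * w) * n s 0 ≤ 𝔽 (n s) 0 :=
    mul_le_hostVirusField_zero hC hD hsig.le hr (fun j => (hx j).le) (by linarith) h23.2
  nlinarith [mul_le_mul_of_nonneg_right hgh (hx 0).le]

theorem host_deriv_ge_neg_mul (hlm : mu < lam) (hC : 0 ≤ C) (hD : 0 ≤ D)
    (hsig : 0 ≤ sig) (hr : 0 ≤ r) (hpos : ∀ t, 0 ≤ t → ∀ i, 0 < n t i) {B : ℝ}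
    (hB : ∀ t, 0 ≤ t → n t 0 + n t 1 + n t 2 + n t 3 ≤ B) (t : ℝ) (ht : 0 ≤ t) :
    -(C * B + D * B) * n t 0 ≤ 𝔽 (n t) 0 := by
  have hx := hpos t ht
  have : (lam - mu - C * B - D * B) * n t 0 ≤ 𝔽 (n t) 0 :=
    mul_le_hostVirusField_zero hC hD hsig hr (fun j => (hx j).le)
      (by linarith [hB t ht, hx 3]) (by linarith [hB t ht, hx 0, hx 1, hx 2])
  nlinarith [hx 0]

theorem exists_virus_le_of_host_le (hD : 0 < D) (hq1 : q < 1) (hrv : 0 < r + v) (hmu2 : 0 < mu2)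
    (hmv : 0 < m * v) (hn : ∀ t, 0 ≤ t → HasDerivAt n (𝔽 (n t)) t)
    (hpos : ∀ t, 0 ≤ t → ∀ i, 0 < n t i) {B : ℝ}
    (hB : ∀ t, 0 ≤ t → n t 0 + n t 1 + n t 2 + n t 3 ≤ B) :
    ∃ θ > 0, ∀ u > 0, ∃ T ≥ 0, ∀ a b, 0 ≤ a → (∀ t ∈ Icc a b, n t 0 ≤ θ) →
      ∀ t ∈ Icc a b, a + T ≤ t → n t 2 ≤ u ∧ n t 3 ≤ u := by
  set α := m * v / (r + v)
  have hα : 0 < α := div_pos hmv hrv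
  have hαrv : α * (r + v) = m * v := div_mul_cancel₀ _ hrv.ne'
  set k := (1 - q) * D
  have hk : 0 < k := mul_pos (by linarith) hD
  set c := min ((r + v) / (α + 1)) (mu2 / 2)
  have hc : 0 < c := lt_min (div_pos hrv (by linarith)) (by linarith)
  have hcα : c * (α + 1) ≤ r + v := (le_div_iff₀ (by linarith)).1 (min_le_left _ _)
  -- `U = (α + 1) n₁ᵢ + n₂` has `U' = -(r + v) n₁ᵢ + (α (1 - q) D n₁ₐ - μ₂) n₂ ≤ -c U`
  -- while `n₁ₐ ≤ μ₂ / (2 α (1 - q) D)`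
  refine ⟨mu2 / (2 * (α * k)), by positivity, fun u hu => ?_⟩
  have hB0 := nonneg_of_sum_le hpos hB
  refine ⟨(α + 1) * B / (c * u), by positivity, fun a b ha hle t ht htT => ?_⟩
  have hd (s) (hs : s ∈ Icc a b) (i : Fin 4) := hasDerivAt_pi.1 (hn s (ha.trans hs.1)) i
  have hU := le_of_hasDerivAt_le_neg (f := fun s => (α + 1) * n s 2 + n s 3) (θ := u)
    (mul_pos hc hu) (fun s hs => ((hd s hs 2).const_mul (α + 1)).add (hd s hs 3))
    (fun s hs hus => ?_) ?_ t ht htT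
  · have hx := hpos t (ha.trans ht.1)
    constructor <;> nlinarith [hx 2, hx 3]
  · have hx := hpos s (ha.trans hs.1)
    have hαk : α * k * n s 0 ≤ mu2 / 2 :=
      calc _ ≤ α * k * (mu2 / (2 * (α * k))) :=
            mul_le_mul_of_nonneg_left (hle s hs) (mul_pos hα hk).le
        _ = mu2 / 2 := by field_simp
    have hI : m * v - (α + 1) * (r + v) = -(r + v) := by linarith
    rw [hostVirusField_virus_load, add_sub_cancel_right, hI]
    nlinarith [mul_le_mul_of_nonneg_right hαk (hx 3).le, mul_le_mul_of_nonneg_right hcα (hx 2).le,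
      mul_le_mul_of_nonneg_right (min_le_right _ _ : c ≤ mu2 / 2) (hx 3).le,
      mul_le_mul_of_nonneg_left hus hc.le]
  · have hx := hpos a ha
    rw [mul_div_cancel₀ _ (mul_pos hc hu).ne']
    nlinarith [hB a ha, mul_le_mul_of_nonneg_left (show n a 2 + n a 3 ≤ B by
      linarith [hB a ha, hx 0, hx 1]) (by linarith : (0 : ℝ) ≤ α + 1), mul_pos hα (hx 3)]

theorem exists_host_excursion_bound (hlm : mu < lam) (hC : 0 < C) (hD : 0 < D) (hq0 : 0 ≤ q)
    (hq1 : q < 1) (hkm : 0 ≤ kap * mu) (hsig : 0 < sig) (hr : 0 ≤ r) (hrv : 0 < r + v)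
    (hmu2 : 0 < mu2) (hmv : 0 < m * v) (hn : ∀ t, 0 ≤ t → HasDerivAt n (𝔽 (n t)) t)
    (hpos : ∀ t, 0 ≤ t → ∀ i, 0 < n t i) {B : ℝ}
    (hB : ∀ t, 0 ≤ t → n t 0 + n t 1 + n t 2 + n t 3 ≤ B) :
    ∃ θ > 0, ∀ μ₀ > 0, ∃ T ≥ 0, ∀ a b, 0 ≤ a → a + T ≤ b → μ₀ ≤ n a 0 →
      (∀ t ∈ Icc a b, n t 0 ≤ θ) → θ ≤ n b 0 := by
  have hB0 := nonneg_of_sum_le hpos hB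
  obtain ⟨θU, hθU, hvirus⟩ := exists_virus_le_of_host_le hD hq1 hrv hmu2 hmv hn hpos hB
  set θ := min θU ((lam - mu) / (4 * C))
  have hθ : 0 < θ := lt_min hθU (div_pos (by linarith) (by positivity))
  refine ⟨θ, hθ, fun μ₀ hμ₀ => ?_⟩
  set d := q * D * B / sig + 1
  set u := (lam - mu) / (4 * (C * (d + 1) + D))
  have hden : 0 < C * (d + 1) + D := by positivity
  have hu : 0 < u := div_pos (by linarith) (by positivity)
  have hg : 0 < (lam - mu) / 2 := half_pos (sub_pos.2 hlm)
  have hgh : (lam - mu) / 2 ≤ lam - mu - C * (θ + d * u + u) - D * u := by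
    have hCθ := (le_div_iff₀ (by positivity)).1 (min_le_right θU ((lam - mu) / (4 * C)))
    have hCu : (C * (d + 1) + D) * u = (lam - mu) / 4 := by
      simp only [u]
      field_simp
    linarith
  obtain ⟨TU, hTU0, hTU⟩ := hvirus u hu
  set T₁ := TU + B / (sig * u) with hT₁
  have hTU₁ : TU ≤ T₁ := by rw [hT₁]; linarith [div_nonneg hB0 (mul_pos hsig hu).le]
  -- a lower bound for the host at time `a + T₁`, by which the virus load and the dormant cells
  -- have become small
  set h₀ := μ₀ * exp (-(C * B + D * B) * T₁)
  have hh₀ : 0 < h₀ := by positivity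
  refine ⟨T₁ + θ / (h₀ * ((lam - mu) / 2)), by positivity, fun a b ha hab hμa hle => ?_⟩
  have hT₂ : 0 ≤ θ / (h₀ * ((lam - mu) / 2)) := by positivity
  have hvs := hTU a b ha (fun t ht => (hle t ht).trans (min_le_left _ _))
  have hstart : h₀ ≤ n (a + T₁) 0 := by
    have := mul_exp_le_of_hasDerivAt_ge_mul (f := fun t => n t 0) (show a ≤ a + T₁ by linarith)
      (fun t ht => hasDerivAt_pi.1 (hn t (ha.trans ht.1)) 0)
      (fun t ht => host_deriv_ge_neg_mul hlm hC.le hD.le hsig.le hr hpos hB t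
        (ha.trans ht.1))
    rw [add_sub_cancel_left] at this
    exact (mul_le_mul_of_nonneg_right hμa (exp_pos _).le).trans this
  exact host_ge_of_virus_le hC.le hD.le hq0 hkm hsig hr hn hpos hB (a := a + TU) (b := b)
    (by linarith) hu (fun t ht => hvs t ⟨by linarith [ht.1], ht.2⟩ ht.1) hg hgh hθ hh₀
    (by rwa [add_assoc]) b ⟨by linarith, le_rfl⟩ (by linarith)

theorem exists_host_lower_bound (hlm : mu < lam) (hC : 0 < C) (hD : 0 < D) (hq0 : 0 ≤ q)
    (hq1 : q < 1) (hkm : 0 ≤ kap * mu) (hsig : 0 < sig) (hr : 0 ≤ r) (hrv : 0 < r + v)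
    (hmu2 : 0 < mu2) (hmv : 0 < m * v) (hn : ∀ t, 0 ≤ t → HasDerivAt n (𝔽 (n t)) t)
    (hpos : ∀ t, 0 ≤ t → ∀ i, 0 < n t i) {B : ℝ}
    (hB : ∀ t, 0 ≤ t → n t 0 + n t 1 + n t 2 + n t 3 ≤ B) :
    ∃ θ > 0, ∀ t, 0 ≤ t → θ ≤ n t 0 := by
  obtain ⟨θ, hθ, hexc⟩ :=
    exists_host_excursion_bound hlm hC hD hq0 hq1 hkm hsig hr hrv hmu2 hmv hn hpos hB
  have hμ₀ : 0 < min θ (n 0 0) := lt_min hθ (hpos 0 le_rfl 0)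
  obtain ⟨T, hT, hexcT⟩ := hexc _ hμ₀
  have hB0 := nonneg_of_sum_le hpos hB
  refine ⟨min θ (n 0 0) * exp (-(C * B + D * B) * T), by positivity,
    le_of_forall_excursion (by positivity) hT hμ₀.le (min_le_left _ _) (min_le_right _ _)
      (fun t ht => hasDerivAt_pi.1 (hn t ht) 0)
      (host_deriv_ge_neg_mul hlm hC.le hD.le hsig.le hr hpos hB)
      fun a b ha hab hμa hle => ⟨a, ⟨le_rfl, by linarith⟩, ?_⟩⟩
  exact (hle a ⟨le_rfl, by linarith⟩).trans (hexcT a b ha hab hμa hle)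

theorem exists_virus_load_excursion_bound (hlm : mu < lam) (hC : 0 < C) (hD : 0 < D)
    (hq0 : 0 ≤ q) (hq1 : q < 1) (hkm : 0 ≤ kap * mu) (hsig : 0 < sig) (hr : 0 ≤ r)
    (hrv : 0 < r + v) (hmu2 : 0 < mu2)
    (hcoex : (m * v - (r + v)) * (1 - q) * D * ((lam - mu) / C) > mu2 * (r + v))
    (hn : ∀ t, 0 ≤ t → HasDerivAt n (𝔽 (n t)) t) (hpos : ∀ t, 0 ≤ t → ∀ i, 0 < n t i) {B : ℝ}
    (hB : ∀ t, 0 ≤ t → n t 0 + n t 1 + n t 2 + n t 3 ≤ B) {θ₀ : ℝ} (hθ₀ : 0 < θ₀)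
    (hhost : ∀ t, 0 ≤ t → θ₀ ≤ n t 0) :
    ∃ w > 0, ∃ T ≥ 0, ∀ a b, 0 ≤ a → a + T ≤ b →
      (∀ t ∈ Icc a b, m * v / (r + v) * n t 2 + n t 3 ≤ w) →
      m * v / (r + v) * n (a + T) 2 + n (a + T) 3 ≤ m * v / (r + v) * n b 2 + n b 3 := by
  have hα := one_lt_of_coexistence hlm hC hD hq1 hrv hmu2 hcoex
  have hk : 0 < (1 - q) * D := mul_pos (by linarith) hD
  have hstar := threshold_lt_of_coexistence hk hrv hcoex hα
  set α := m * v / (r + v)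
  set k := (1 - q) * D
  set nbar := (lam - mu) / C
  have hCn : C * nbar = lam - mu := mul_div_cancel₀ _ hC.ne'
  have hα1 : 0 < (α - 1) * k := mul_pos (by linarith) hk
  -- above `hV` the virus load is nondecreasing, and the host can climb to `hV`
  set hV := (mu2 / ((α - 1) * k) + nbar) / 2 with hVdef
  have hV0 : 0 < hV := by positivity
  have hVn : 0 < nbar - hV := by linarith
  have hB0 := nonneg_of_sum_le hpos hB
  set d := q * D * B / sig + 1
  have hden : 0 < C * (d + 1) + D := by positivity
  set w := C * (nbar - hV) / (2 * (C * (d + 1) + D))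
  have hw : 0 < w := div_pos (mul_pos hC hVn) (by positivity)
  set g := C * (nbar - hV) / 2 with hgdef
  have hg : 0 < g := half_pos (mul_pos hC hVn)
  have hgh : g ≤ lam - mu - C * (hV + d * w + w) - D * w := by
    have hCw : (C * (d + 1) + D) * w = g := by
      simp only [w, g]
      field_simp
    linarith
  refine ⟨w, hw, B / (sig * w) + hV / (θ₀ * g), by positivity, fun a b ha hab hle => ?_⟩
  have hsmall (t) (ht : t ∈ Icc a b) : n t 2 ≤ w ∧ n t 3 ≤ w := by
    have hx := hpos t (ha.trans ht.1)
    have := le_mul_of_one_le_left (hx 2).le hα.le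
    constructor <;> linarith [hle t ht, hx 2, hx 3]
  have hrec := host_ge_of_virus_le hC.le hD.le hq0 hkm hsig hr hn hpos hB ha hw hsmall hg hgh hV0
    hθ₀ (hhost _ (by positivity))
  have hT : 0 ≤ B / (sig * w) + hV / (θ₀ * g) := by positivity
  have hd (t) (ht : 0 ≤ t) (i : Fin 4) := hasDerivAt_pi.1 (hn t ht) i
  refine le_of_hasDerivAt_nonneg hab (fun t ht => ((hd t (by linarith [ht.1]) 2).const_mul α).add
    (hd t (by linarith [ht.1]) 3)) (fun t ht => ?_)
  have hx := hpos t (by linarith [ht.1])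
  have hhV := hrec t ⟨by linarith [ht.1], ht.2⟩ (by linarith [ht.1])
  have : mu2 ≤ (α - 1) * k * n t 0 := by
    calc mu2 = (α - 1) * k * (mu2 / ((α - 1) * k)) := (mul_div_cancel₀ mu2 hα1.ne').symm
      _ ≤ (α - 1) * k * n t 0 := mul_le_mul_of_nonneg_left (by linarith) hα1.le
  rw [hostVirusField_virus_load_of_mul_eq _ (div_mul_cancel₀ _ hrv.ne')]
  exact mul_nonneg (by linarith) (hx 3).le

theorem exists_virus_load_lower_bound (hlm : mu < lam) (hC : 0 < C) (hD : 0 < D) (hq0 : 0 ≤ q)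
    (hq1 : q < 1) (hkm : 0 ≤ kap * mu) (hsig : 0 < sig) (hr : 0 ≤ r) (hrv : 0 < r + v)
    (hmu2 : 0 < mu2)
    (hcoex : (m * v - (r + v)) * (1 - q) * D * ((lam - mu) / C) > mu2 * (r + v))
    (hn : ∀ t, 0 ≤ t → HasDerivAt n (𝔽 (n t)) t) (hpos : ∀ t, 0 ≤ t → ∀ i, 0 < n t i) {B : ℝ}
    (hB : ∀ t, 0 ≤ t → n t 0 + n t 1 + n t 2 + n t 3 ≤ B) {θ₀ : ℝ} (hθ₀ : 0 < θ₀)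
    (hhost : ∀ t, 0 ≤ t → θ₀ ≤ n t 0) :
    ∃ ρ > 0, ∀ t, 0 ≤ t → ρ ≤ m * v / (r + v) * n t 2 + n t 3 := by
  have hα := one_lt_of_coexistence hlm hC hD hq1 hrv hmu2 hcoex
  obtain ⟨w, hw, T, hT, hexc⟩ := exists_virus_load_excursion_bound hlm hC hD hq0 hq1 hkm hsig hr
    hrv hmu2 hcoex hn hpos hB hθ₀ hhost
  have hW0 : 0 < m * v / (r + v) * n 0 2 + n 0 3 :=
    add_pos (mul_pos (by linarith) (hpos 0 le_rfl 2)) (hpos 0 le_rfl 3)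
  have hμ₀ : 0 < min w (m * v / (r + v) * n 0 2 + n 0 3) := lt_min hw hW0
  refine ⟨_ * exp (-mu2 * T), by positivity,
    le_of_forall_excursion (f := fun t => m * v / (r + v) * n t 2 + n t 3) hmu2.le hT hμ₀.le
      (min_le_left _ _) (min_le_right _ _)
      (fun t ht => ((hasDerivAt_pi.1 (hn t ht) 2).const_mul _).add (hasDerivAt_pi.1 (hn t ht) 3))
      (fun t ht => ?_)
      fun a b ha hab _ hle => ⟨a + T, ⟨by linarith, le_rfl⟩, hexc a b ha hab hle⟩⟩
  have hx := hpos t ht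
  rw [hostVirusField_virus_load_of_mul_eq _ (div_mul_cancel₀ _ hrv.ne')]
  nlinarith [mul_pos (mul_pos (mul_pos (sub_pos.2 hα) (mul_pos (sub_pos.2 hq1) hD)) (hx 0)) (hx 3),
    mul_pos (mul_pos hmu2 (by linarith : (0 : ℝ) < m * v / (r + v))) (hx 2)]

lemma sum_abs_sub_virusFree (c : ℝ) (x : Fin 4 → ℝ) :
    ∑ i, |x i - ![c, 0, 0, 0] i| = |x 0 - c| + |x 1| + |x 2| + |x 3| := by
  simp [Fin.sum_univ_four]

theorem div_le_liminf_sum_abs_sub_virusFree (c : ℝ) {α ρ B : ℝ} (hα : 1 ≤ α)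
    (hpos : ∀ t, 0 ≤ t → ∀ i, 0 < n t i) (hB : ∀ t, 0 ≤ t → n t 0 + n t 1 + n t 2 + n t 3 ≤ B)
    (hρ : ∀ t, 0 ≤ t → ρ ≤ α * n t 2 + n t 3) :
    ρ / α ≤ liminf (fun t => ∑ i, |n t i - ![c, 0, 0, 0] i|) atTop := by
  refine le_liminf_of_le ?_ ?_
  · refine isCoboundedUnder_ge_of_eventually_le atTop (x := |c| + B) ?_
    filter_upwards [eventually_ge_atTop 0] with t ht
    have hx := hpos t ht
    rw [sum_abs_sub_virusFree, abs_of_pos (hx 1), abs_of_pos (hx 2), abs_of_pos (hx 3)]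
    linarith [abs_sub (n t 0) c, abs_of_pos (hx 0), hB t ht]
  · filter_upwards [eventually_ge_atTop 0] with t ht
    have hx := hpos t ht
    rw [sum_abs_sub_virusFree, abs_of_pos (hx 1), abs_of_pos (hx 2), abs_of_pos (hx 3),
      div_le_iff₀ (by linarith)]
    nlinarith [hρ t ht, mul_nonneg (abs_nonneg (n t 0 - c)) (by linarith : 0 ≤ α),
      mul_nonneg (hx 1).le (by linarith : 0 ≤ α), le_mul_of_one_le_right (hx 3).le hα]

end Trajectory

end HostVirus

open HostVirus

theorem virus_free_uniform_strong_repeller_general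
    (lam mu C D q kap sig r v mu2 m : ℝ)
    (hmu : 0 < mu) (hlm : mu < lam) (hC : 0 < C) (hD : 0 < D)
    (hq0 : 0 < q) (hq1 : q < 1) (hkap : 0 ≤ kap) (hsig : 0 < sig)
    (hr : 0 < r) (hv : 0 < v) (hmu2 : 0 < mu2)
    (hcoex : (m * v - (r + v)) * (1 - q) * D * ((lam - mu) / C) > mu2 * (r + v))
    (n : ℝ → (Fin 4 → ℝ))
    (hderiv : ∀ t : ℝ, 0 ≤ t → HasDerivAt n (hostVirusField lam mu C D q kap sig r v mu2 m (n t)) t)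
    (hinit : ∀ i, 0 < n 0 i) :
    ∃ ρ > (0 : ℝ),
      ρ ≤ Filter.liminf
        (fun t : ℝ => ∑ i : Fin 4, |n t i - ![(lam - mu) / C, 0, 0, 0] i|) atTop := by
  have hrv : 0 < r + v := add_pos hr hv
  have hkm : 0 ≤ kap * mu := mul_nonneg hkap hmu.le
  have hα := one_lt_of_coexistence hlm hC hD hq1 hrv hmu2 hcoex
  have hmv : 0 < m * v := hrv.trans ((one_lt_div hrv).1 hα)
  have hpos := solution_pos hC.le hD.le hq0.le hq1.le hsig.le hr.le hmv.le hderiv hinit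
  obtain ⟨B, hB⟩ := exists_sum_le hC hkm hv.le hmu2 hmv.le
    (mul_nonneg (sub_nonneg.2 hq1.le) hD.le) hderiv hpos
  obtain ⟨θ₀, hθ₀, hhost⟩ :=
    exists_host_lower_bound hlm hC hD hq0.le hq1 hkm hsig hr.le hrv hmu2 hmv hderiv hpos hB
  obtain ⟨ρ, hρ, hW⟩ := exists_virus_load_lower_bound hlm hC hD hq0.le hq1 hkm hsig hr.le hrv
    hmu2 hcoex hderiv hpos hB hθ₀ hhost
  exact ⟨ρ / (m * v / (r + v)), div_pos hρ (by linarith),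
    div_le_liminf_sum_abs_sub_virusFree _ hα.le hpos hB hW⟩

theorem virus_free_uniform_strong_repeller
    (lam mu C D q kap sig r v mu2 m : ℝ)
    (hmu : 0 < mu) (hlm : mu < lam) (hC : 0 < C) (hD : 0 < D)
    (hq0 : 0 < q) (hq1 : q < 1) (hkap : 0 ≤ kap) (hsig : 0 < sig)
    (hr : 0 < r) (hv : 0 < v) (hmu2 : 0 < mu2) (hm : 0 < m)
    (hcoex : (m * v - (r + v)) * (1 - q) * D * ((lam - mu) / C) > mu2 * (r + v))
    (n : ℝ → (Fin 4 → ℝ))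
    (hderiv : ∀ t : ℝ, 0 ≤ t → HasDerivAt n (hostVirusField lam mu C D q kap sig r v mu2 m (n t)) t)
    (hinit : ∀ i, 0 < n 0 i) :
    ∃ ρ > (0 : ℝ),
      ρ ≤ Filter.liminf
        (fun t : ℝ => ∑ i : Fin 4, |n t i - ![(lam - mu) / C, 0, 0, 0] i|) atTop :=
  virus_free_uniform_strong_repeller_general lam mu C D q kap sig r v mu2 m hmu hlm hC hD hq0 hq1
    hkap hsig hr hv hmu2 hcoex n hderiv hinit
end

section
/- Assume λ₁ > μ₁. Every complex eigenvalue of the 2×2 real matrix J₂ with rows (−(r+v), (1−q)D n̄₁ₐ) and (mv, −((1−q)D n̄₁ₐ + μ₂)) is real; the number λ̃ = (−(r+v+(1−q)Dn̄₁ₐ+μ₂) + √((r+v+(1−q)Dn̄₁ₐ+μ₂)² − 4((r+v−mv)(1−q)Dn̄₁ₐ + (r+v)μ₂)))/2 is an eigenvalue of J₂, every eigenvalue of J₂ is at most λ̃, and λ̃ > 0 if and only if the coexistence condition (m v − (r+v))·(1−q)·D·n̄₁ₐ > μ₂·(r+v) holds. -/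
lemma eig_fin_two (A : Matrix (Fin 2) (Fin 2) ℝ) (z : ℂ) :
    IsEigOf A z ↔ z^2 - ((A 0 0 + A 1 1 : ℝ) : ℂ)*z + (((A 0 0 * A 1 1 - A 0 1 * A 1 0 : ℝ)) : ℂ) = 0 := by
  unfold IsEigOf
  rw [Matrix.charpoly, Matrix.det_fin_two]
  simp [Polynomial.IsRoot, Matrix.charmatrix_apply_eq, Matrix.charmatrix_apply_ne]
  constructor <;> intro h <;> linear_combination h

theorem mean_matrix_largest_eigenvalue
    (lam mu C D q r v mu2 m : ℝ)
    (hmu : 0 < mu) (hlm : mu < lam) (hC : 0 < C) (hD : 0 < D)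
    (hq0 : 0 < q) (hq1 : q < 1)
    (hr : 0 < r) (hv : 0 < v) (hmu2 : 0 < mu2) (hm : 0 < m)
    (J2 : Matrix (Fin 2) (Fin 2) ℝ)
    (hJ2 : J2 = !![-(r + v), (1 - q) * D * ((lam - mu) / C);
                   m * v, -((1 - q) * D * ((lam - mu) / C) + mu2)])
    (tl : ℝ)
    (htl : tl = (-(r + v + (1 - q) * D * ((lam - mu) / C) + mu2) +
        Real.sqrt ((r + v + (1 - q) * D * ((lam - mu) / C) + mu2) ^ 2 -
          4 * ((r + v - m * v) * (1 - q) * D * ((lam - mu) / C) + (r + v) * mu2))) / 2) :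
    (∀ z : ℂ, IsEigOf J2 z → z.im = 0) ∧
    IsEigOf J2 (tl : ℂ) ∧
    (∀ z : ℂ, IsEigOf J2 z → z.re ≤ tl) ∧
    (0 < tl ↔ (m * v - (r + v)) * (1 - q) * D * ((lam - mu) / C) > mu2 * (r + v)) := by
  set a : ℝ := (1 - q) * D * ((lam - mu) / C) with ha
  have haPos : 0 < a := by
    have h1 : 0 < 1 - q := by linarith
    have h2 : 0 < (lam - mu) / C := div_pos (by linarith) hC
    positivity
  set s : ℝ := r + v + a + mu2 with hs
  have hs0 : 0 < s := by rw [hs]; linarith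
  set d : ℝ := (r + v - m * v) * a + (r + v) * mu2 with hd
  have hΔ0 : 0 ≤ s ^ 2 - 4 * d := by
    have h : s ^ 2 - 4 * d = (r + v - (a + mu2)) ^ 2 + 4 * a * (m * v) := by
      rw [hs, hd]; ring
    rw [h]; positivity
  set e : ℝ := Real.sqrt (s ^ 2 - 4 * d) with he
  have he0 : 0 ≤ e := Real.sqrt_nonneg _
  have he2 : e ^ 2 = s ^ 2 - 4 * d := Real.sq_sqrt hΔ0
  have harg : s ^ 2 - 4 * ((r + v - m * v) * (1 - q) * D * ((lam - mu) / C) + (r + v) * mu2)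
      = s ^ 2 - 4 * d := by rw [hd, ha]; ring
  have htl' : tl = (-s + e) / 2 := by rw [htl, harg, ← he]
  clear_value a s d e
  set t2 : ℝ := (-s - e) / 2 with ht2
  have hchar : ∀ z : ℂ, IsEigOf J2 z ↔ (z - (tl : ℂ)) * (z - (t2 : ℂ)) = 0 := by
    intro z
    rw [eig_fin_two, hJ2]
    have h00 : (!![-(r + v), a; m * v, -(a + mu2)] : Matrix (Fin 2) (Fin 2) ℝ) 0 0 = -(r+v) := rfl
    have h01 : (!![-(r + v), a; m * v, -(a + mu2)] : Matrix (Fin 2) (Fin 2) ℝ) 0 1 = a := rfl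
    have h10 : (!![-(r + v), a; m * v, -(a + mu2)] : Matrix (Fin 2) (Fin 2) ℝ) 1 0 = m * v := rfl
    have h11 : (!![-(r + v), a; m * v, -(a + mu2)] : Matrix (Fin 2) (Fin 2) ℝ) 1 1 = -(a + mu2) := rfl
    rw [h00, h01, h10, h11]
    have htrace : (-(r+v)) + (-(a + mu2)) = -s := by rw [hs]; ring
    have hdet : (-(r+v)) * (-(a + mu2)) - a * (m * v) = d := by rw [hd]; ring
    rw [htrace, hdet]
    have hrs : (tl : ℂ) + (t2 : ℂ) = ((-s : ℝ) : ℂ) := by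
      rw [htl', ht2]; push_cast; ring
    have hrp : (tl : ℂ) * (t2 : ℂ) = ((d : ℝ) : ℂ) := by
      have hre : (tl : ℝ) * t2 = d := by
        rw [htl', ht2]
        have h : ((-s + e) / 2 : ℝ) * ((-s - e) / 2) = (s ^ 2 - e ^ 2) / 4 := by ring
        rw [h, he2]; ring
      rw [← hre]; push_cast; ring
    have key : z^2 - ((-s : ℝ) : ℂ)*z + ((d : ℝ) : ℂ) = (z - (tl : ℂ)) * (z - (t2 : ℂ)) := by
      linear_combination z * hrs - hrp
    rw [key]
  have ht2le : t2 ≤ tl := by rw [htl', ht2]; linarith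
  refine ⟨?_, ?_, ?_, ?_⟩
  · intro z hz
    rcases mul_eq_zero.mp ((hchar z).mp hz) with h | h
    · rw [sub_eq_zero.mp h]; exact Complex.ofReal_im tl
    · rw [sub_eq_zero.mp h]; exact Complex.ofReal_im t2
  · exact (hchar (tl : ℂ)).mpr (by rw [sub_self, zero_mul])
  · intro z hz
    rcases mul_eq_zero.mp ((hchar z).mp hz) with h | h
    · rw [sub_eq_zero.mp h, Complex.ofReal_re]
    · rw [sub_eq_zero.mp h, Complex.ofReal_re]; exact ht2le
  · have hgoal : (m * v - (r + v)) * (1 - q) * D * ((lam - mu) / C) = (m * v - (r + v)) * a := by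
      rw [ha]; ring
    rw [hgoal]
    constructor
    · intro h
      have hse : s < e := by rw [htl'] at h; linarith
      have hs2 : s ^ 2 < e ^ 2 := by nlinarith
      have hd0 : d < 0 := by linarith [he2]
      linarith [hd0, hd.ge, hd.le]
    · intro h
      have hd0 : d < 0 := by rw [hd]; linarith
      have hs2 : s ^ 2 < e ^ 2 := by linarith [he2]
      have hse : s < e := by nlinarith
      rw [htl']; linarith
end

section
/- Assume λ₁ > μ₁, let m ≥ 2 be a natural number, and define the real polynomial f(x) = a·x^m − b·x + c with a = (1−q)D n̄₁ₐ · v/(r+v), b = (1−q)D n̄₁ₐ + μ₂, and c = μ₂ + (1−q)D n̄₁ₐ · r/(r+v). Then f(1) = 0, f(0) > 0, f'(1) = ((1−q)D n̄₁ₐ (mv−(r+v)) − μ₂(r+v))/(r+v), and if the coexistence condition (m v − (r+v))·(1−q)·D·n̄₁ₐ > μ₂·(r+v) holds, then f has exactly one root in the open interval (0,1). -/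
theorem extinction_probability_polynomial
    (lam mu C D q r v mu2 : ℝ) (m : ℕ)
    (hmu : 0 < mu) (hlm : mu < lam) (hC : 0 < C) (hD : 0 < D)
    (hq0 : 0 < q) (hq1 : q < 1)
    (hr : 0 < r) (hv : 0 < v) (hmu2 : 0 < mu2) (hm : 2 ≤ m)
    (a b c : ℝ)
    (ha : a = (1 - q) * D * ((lam - mu) / C) * (v / (r + v)))
    (hb : b = (1 - q) * D * ((lam - mu) / C) + mu2)
    (hc : c = mu2 + (1 - q) * D * ((lam - mu) / C) * (r / (r + v)))
    (f : ℝ → ℝ) (hf : f = fun x => a * x ^ m - b * x + c) :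
    f 1 = 0 ∧
    0 < f 0 ∧
    deriv f 1 = ((1 - q) * D * ((lam - mu) / C) * ((m : ℝ) * v - (r + v)) - mu2 * (r + v))
        / (r + v) ∧
    (((m : ℝ) * v - (r + v)) * (1 - q) * D * ((lam - mu) / C) > mu2 * (r + v) →
      ∃! x : ℝ, x ∈ Set.Ioo (0 : ℝ) 1 ∧ f x = 0) := by
  have hrv : 0 < r + v := by linarith
  have hN : 0 < (1 - q) * D * ((lam - mu) / C) :=
    mul_pos (mul_pos (by linarith) hD) (div_pos (by linarith) hC)
  have ha' : 0 < a := by rw [ha]; exact mul_pos hN (div_pos hv hrv)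
  have hc' : 0 < c := by
    rw [hc]
    have : 0 < (1 - q) * D * ((lam - mu) / C) * (r / (r + v)) :=
      mul_pos hN (div_pos hr hrv)
    linarith
  have habc : a + c = b := by
    rw [ha, hb, hc]; field_simp; ring
  have hf1 : f 1 = 0 := by rw [hf]; simp; linarith
  have hf0 : 0 < f 0 := by
    rw [hf]; simp [zero_pow (by omega : m ≠ 0)]; linarith
  -- derivative
  have hderiv : ∀ x : ℝ, HasDerivAt f (a * (m * x ^ (m - 1)) - b) x := by
    intro x
    rw [hf]
    have h1 := (hasDerivAt_pow m x).const_mul a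
    have h2 := (hasDerivAt_id x).const_mul b
    simpa using (h1.sub h2).add_const c
  have hderiv1 : deriv f 1 = a * m - b := by
    rw [(hderiv 1).deriv]; simp
  -- the auxiliary function g
  set g : ℝ → ℝ := fun x => a * (∑ i ∈ Finset.range m, x ^ i) - b with hg
  have hfact : ∀ x : ℝ, f x = (x - 1) * g x := by
    intro x
    rw [hf, hg]
    have hgs := geom_sum_mul x m
    have hcb : c = b - a := by linarith
    rw [hcb]
    simp only
    nlinarith [hgs]
  have hgmono : StrictMonoOn g (Set.Icc (0:ℝ) 1) := by
    intro x hx y hy hxy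
    rw [hg]
    simp only
    have hsum : ∑ i ∈ Finset.range m, x ^ i < ∑ i ∈ Finset.range m, y ^ i := by
      apply Finset.sum_lt_sum
      · intro i _; exact pow_le_pow_left₀ hx.1 hxy.le i
      · exact ⟨1, Finset.mem_range.mpr (by omega), by simpa using hxy⟩
    nlinarith
  have hgcont : Continuous g := by rw [hg]; fun_prop
  have hg0 : g 0 = a - b := by
    rw [hg]; simp [zero_geom_sum, if_neg (by omega : ¬ m = 0)]
  have hg1 : g 1 = a * m - b := by rw [hg]; simp
  refine ⟨hf1, hf0, ?_, ?_⟩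
  · rw [hderiv1, ha, hb]; field_simp; ring
  · intro hcond
    have hg1pos : 0 < g 1 := by
      rw [hg1, ha, hb]
      have key : (1 - q) * D * ((lam - mu) / C) * (v / (r + v)) * (m : ℝ)
          - ((1 - q) * D * ((lam - mu) / C) + mu2)
          = (((m : ℝ) * v - (r + v)) * (1 - q) * D * ((lam - mu) / C) - mu2 * (r + v))
            / (r + v) := by
        field_simp; ring
      rw [key]
      exact div_pos (by linarith) hrv
    have hg0neg : g 0 < 0 := by rw [hg0]; linarith
    obtain ⟨x, hxmem, hgx⟩ := intermediate_value_Ioo (by norm_num : (0:ℝ) ≤ 1)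
      hgcont.continuousOn (by exact ⟨hg0neg, hg1pos⟩ : (0:ℝ) ∈ Set.Ioo (g 0) (g 1))
    refine ⟨x, ⟨hxmem, by rw [hfact x, hgx, mul_zero]⟩, ?_⟩
    rintro y ⟨hymem, hfy⟩
    have hgy : g y = 0 := by
      rw [hfact y] at hfy
      have : y - 1 ≠ 0 := by have := hymem.2; intro h; linarith [sub_eq_zero.mp h]
      exact (mul_eq_zero.mp hfy).resolve_left this
    exact hgmono.injOn (Set.mem_Icc.mpr ⟨hymem.1.le, hymem.2.le⟩)
      (Set.mem_Icc.mpr ⟨hxmem.1.le, hxmem.2.le⟩) (by rw [hgy, hgx])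
end

section
/- Assume λ₁ > μ₁ and the coexistence condition, and set n* = μ₂(r+v)/((1−q)D(mv−(r+v))) (so n* < n̄₁ₐ). Then for every ε ∈ (0, n̄₁ₐ − n*) there exist weights w₁ᵢ > 0, w₂ > 0 and d > 0 such that for every point x = (x₁, x₂, x₃, x₄) ∈ (0,∞)⁴ with ‖x − (n̄₁ₐ,0,0,0)‖₂ < ε one has w₁ᵢ·((1−q)D x₁ x₄ − (r+v)x₃) + w₂·(m v x₃ − (1−q)D x₁ x₄ − μ₂ x₄) > d·(w₁ᵢ x₃ + w₂ x₄). -/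
set_option maxHeartbeats 800000


theorem chetaev_function_inequality
    (lam mu C D q r v mu2 m : ℝ)
    (hmu : 0 < mu) (hlm : mu < lam) (hC : 0 < C) (hD : 0 < D)
    (hq0 : 0 < q) (hq1 : q < 1)
    (hr : 0 < r) (hv : 0 < v) (hmu2 : 0 < mu2) (hm : 0 < m)
    (hcoex : (m * v - (r + v)) * (1 - q) * D * ((lam - mu) / C) > mu2 * (r + v))
    (nstar : ℝ) (hnstar : nstar = mu2 * (r + v) / ((1 - q) * D * (m * v - (r + v)))) :
    ∀ ε : ℝ, 0 < ε → ε < (lam - mu) / C - nstar →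
      ∃ w1i > (0 : ℝ), ∃ w2 > (0 : ℝ), ∃ d > (0 : ℝ),
        ∀ x : Fin 4 → ℝ, (∀ i, 0 < x i) →
          Real.sqrt (∑ i : Fin 4, (x i - ![(lam - mu) / C, 0, 0, 0] i) ^ 2) < ε →
          w1i * ((1 - q) * D * x 0 * x 3 - (r + v) * x 2) +
            w2 * (m * v * x 2 - (1 - q) * D * x 0 * x 3 - mu2 * x 3)
            > d * (w1i * x 2 + w2 * x 3) := by
  intro ε hε hε2
  set nb : ℝ := (lam - mu) / C with hnb_def
  have hnb : 0 < nb := div_pos (by linarith) hC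
  have hb : 0 < (1 - q) * D := mul_pos (by linarith) hD
  have hrv : 0 < r + v := by linarith
  have hmv : 0 < m * v - (r + v) := by
    nlinarith [mul_pos hb hnb, mul_pos hmu2 hrv]
  have hden : 0 < (1 - q) * D * (m * v - (r + v)) := mul_pos hb hmv
  have hnstar_pos : 0 < nstar := by
    rw [hnstar]; exact div_pos (mul_pos hmu2 hrv) hden
  set ξ : ℝ := nb - ε with hξ_def
  have hξstar : nstar < ξ := by simp only [hξ_def]; linarith
  have hξ : 0 < ξ := lt_trans hnstar_pos hξstar
  have key : mu2 * (r + v) < ξ * ((1 - q) * D * (m * v - (r + v))) := by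
    have := (div_lt_iff₀ hden).mp (hnstar ▸ hξstar)
    linarith
  set B : ℝ := (1 - q) * D * ξ with hB_def
  have hB : 0 < B := mul_pos hb hξ
  have h1 : (B + mu2) / B < m * v / (r + v) := by
    rw [div_lt_div_iff₀ hB hrv]
    simp only [hB_def]
    nlinarith [key]
  set t : ℝ := ((B + mu2) / B + m * v / (r + v)) / 2 with ht_def
  have ht1 : (B + mu2) / B < t := by simp only [ht_def]; linarith
  have ht2 : t < m * v / (r + v) := by simp only [ht_def]; linarith
  have hone : (1 : ℝ) < (B + mu2) / B := (one_lt_div hB).mpr (by linarith)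
  have ht_gt1 : 1 < t := lt_trans hone ht1
  have ht0 : 0 < t := by linarith
  have hc3 : 0 < m * v - t * (r + v) := by
    have := (lt_div_iff₀ hrv).mp ht2; linarith
  have hc4 : 0 < (t - 1) * B - mu2 := by
    have := (div_lt_iff₀ hB).mp ht1; nlinarith
  set d : ℝ := min ((m * v - t * (r + v)) / t) ((t - 1) * B - mu2) / 2 with hd_def
  have hd : 0 < d := half_pos (lt_min (div_pos hc3 ht0) hc4)
  refine ⟨t, ht0, 1, one_pos, d, hd, ?_⟩
  intro x hx hnorm
  -- bound on x 0
  have hterm : (x 0 - nb) ^ 2 ≤ ∑ i : Fin 4, (x i - ![nb, 0, 0, 0] i) ^ 2 := by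
    have := Finset.single_le_sum (f := fun i : Fin 4 => (x i - ![nb, 0, 0, 0] i) ^ 2)
      (fun i _ => sq_nonneg _) (Finset.mem_univ 0)
    simpa using this
  have habs : |x 0 - nb| < ε := by
    calc |x 0 - nb| = Real.sqrt ((x 0 - nb) ^ 2) := (Real.sqrt_sq_eq_abs _).symm
      _ ≤ Real.sqrt (∑ i : Fin 4, (x i - ![nb, 0, 0, 0] i) ^ 2) := Real.sqrt_le_sqrt hterm
      _ < ε := hnorm
  have hx0 : ξ < x 0 := by
    have := (abs_lt.mp habs).1
    simp only [hξ_def]; linarith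
  have hx2 := hx 2
  have hx3 := hx 3
  -- coefficient bounds
  have hdt : 2 * d * t ≤ m * v - t * (r + v) := by
    have h := min_le_left ((m * v - t * (r + v)) / t) ((t - 1) * B - mu2)
    have h2 : d ≤ (m * v - t * (r + v)) / t / 2 := by
      simp only [hd_def]; linarith
    have h3 : d * (2 * t) ≤ (m * v - t * (r + v)) / t / 2 * (2 * t) :=
      mul_le_mul_of_nonneg_right h2 (by positivity)
    have h4 : (m * v - t * (r + v)) / t / 2 * (2 * t) = m * v - t * (r + v) := by
      field_simp
    rw [h4] at h3; linarith
  have hd4 : 2 * d ≤ (t - 1) * B - mu2 := by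
    have h := min_le_right ((m * v - t * (r + v)) / t) ((t - 1) * B - mu2)
    simp only [hd_def]; linarith
  have hBeq : (t - 1) * ((1 - q) * D) * ξ = (t - 1) * B := by
    simp only [hB_def]; ring
  clear_value nb ξ B t d
  clear hnorm hterm habs hnstar hcoex hd_def ht_def hB_def hξ_def hnb_def hx
  have hcoef2 : 0 < m * v - t * (r + v) - d * t := by nlinarith [mul_pos hd ht0]
  have hcoef3 : 0 < (t - 1) * ((1 - q) * D) * x 0 - mu2 - d := by
    have hgt : (t - 1) * ((1 - q) * D) * ξ < (t - 1) * ((1 - q) * D) * x 0 := by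
      have hpos : 0 < (t - 1) * ((1 - q) * D) := mul_pos (by linarith) hb
      exact (mul_lt_mul_iff_right₀ hpos).mpr hx0
    nlinarith
  nlinarith [mul_pos hcoef2 hx2, mul_pos hcoef3 hx3]
end

section
/- Assume λ₁ > μ₁. Let n : [0,∞) → ℝ⁴ be differentiable with n'(t) = F(n(t)) for all t ≥ 0, with initial condition n₁ₐ(0) > 0, n₁d(0) > 0 and n₁ᵢ(0) = n₂(0) = 0. Then n(t) → (n̄₁ₐ, 0, 0, 0) as t → ∞. -/
/-!
The plane `n₁ᵢ = n₂ = 0` is invariant: the pair `(n₁ᵢ, n₂)` solves a linear system whose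
coefficients depend continuously on `n₁ₐ(t)`, so by Grönwall it stays zero. On that plane the
dormant class solves `n₁d' = -(κμ₁ + σ) n₁d`, so it decays exponentially and stays positive, and
the active class solves the logistic equation `n₁ₐ' = n₁ₐ (λ₁ - μ₁ - C n₁ₐ) + (σ - C n₁ₐ) n₁d`.
It stays positive, since its derivative is `σ n₁d > 0` wherever it vanishes. Once `n₁d` is
small, the derivative of `n₁ₐ` has a uniform sign outside any neighbourhood of `n̄₁ₐ`, which
drives `n₁ₐ` into that neighbourhood and keeps it there.
-/

open Filter

open Set Real Topology

theorem eq_zero_of_hasDerivAt_clm_apply {E : Type*} [NormedAddCommGroup E] [NormedSpace ℝ E]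
    {A : ℝ → E →L[ℝ] E} {f : ℝ → E} {a : ℝ} (hA : ContinuousOn A (Ici a))
    (hf : ∀ t ≥ a, HasDerivAt f (A t (f t)) t) (ha : f a = 0) : ∀ t ≥ a, f t = 0 := by
  intro b hb
  obtain ⟨K, hK⟩ := (isCompact_Icc (a := a) (b := b)).exists_bound_of_continuousOn
    (hA.mono Icc_subset_Ici_self)
  refine eq_zero_of_abs_deriv_le_mul_abs_self_of_eq_zero_right (f' := fun t => A t (f t)) (K := K)
    (fun t ht => (hf t ht.1).continuousAt.continuousWithinAt)
    (fun t ht => (hf t ht.1).hasDerivWithinAt) ha (fun t ht => ?_) b ⟨hb, le_rfl⟩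
  exact (A t).le_of_opNorm_le (hK t (Ico_subset_Icc_self ht)) (f t)

theorem eq_mul_exp_of_hasDerivAt_mul_self {x : ℝ → ℝ} {c a : ℝ}
    (hx : ∀ t ≥ a, HasDerivAt x (c * x t) t) : ∀ t ≥ a, x t = x a * exp (c * (t - a)) := by
  have hexp : ∀ t,
      HasDerivAt (fun u => x a * exp (c * (u - a))) (c * (x a * exp (c * (t - a)))) t :=
    fun t => ((((hasDerivAt_id t).sub_const a).const_mul c).exp.const_mul (x a)).congr_deriv
      (by simp only [id, mul_one]; ring)
  have hzero := eq_zero_of_hasDerivAt_clm_apply (A := fun _ => c • ContinuousLinearMap.id ℝ ℝ)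
    (f := fun t => x t - x a * exp (c * (t - a))) continuousOn_const
    (fun t ht => ((hx t ht).sub (hexp t)).congr_deriv (by simp [mul_sub])) (by simp)
  exact fun t ht => sub_eq_zero.1 (hzero t ht)

theorem le_of_hasDerivAt_neg_of_eq_s19 {x x' : ℝ → ℝ} {a c : ℝ}
    (hx : ∀ t ≥ a, HasDerivAt x (x' t) t) (ha : x a ≤ c) (hc : ∀ t ≥ a, x t = c → x' t < 0) :
    ∀ t ≥ a, x t ≤ c := fun _ hb =>
  image_le_of_deriv_right_lt_deriv_boundary (B := fun _ => c) (B' := 0)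
    (fun t ht => (hx t ht.1).continuousAt.continuousWithinAt)
    (fun t ht => (hx t ht.1).hasDerivWithinAt) ha (fun _ => hasDerivAt_const _ _)
    (fun t ht => hc t ht.1) ⟨hb, le_rfl⟩

theorem ge_of_hasDerivAt_pos_of_eq {x x' : ℝ → ℝ} {a c : ℝ}
    (hx : ∀ t ≥ a, HasDerivAt x (x' t) t) (ha : c ≤ x a) (hc : ∀ t ≥ a, x t = c → 0 < x' t) :
    ∀ t ≥ a, c ≤ x t := by
  have := le_of_hasDerivAt_neg_of_eq_s19 (x := fun t => -x t) (c := -c) (fun t ht => (hx t ht).neg)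
    (neg_le_neg ha) (fun t ht h => neg_neg_of_pos (hc t ht (neg_inj.1 h)))
  exact fun t ht => neg_le_neg_iff.1 (this t ht)

theorem pos_of_hasDerivAt_pos_of_eq_zero {x x' : ℝ → ℝ} {a : ℝ}
    (hx : ∀ t ≥ a, HasDerivAt x (x' t) t) (ha : 0 < x a) (hzero : ∀ t ≥ a, x t = 0 → 0 < x' t) :
    ∀ t ≥ a, 0 < x t := by
  have hnonneg := ge_of_hasDerivAt_pos_of_eq hx ha.le hzero
  intro t ht
  refine (hnonneg t ht).lt_of_ne fun h => (hzero t ht h.symm).ne' ?_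
  -- A zero after time `a` would be an interior minimum of the nonnegative function `x`.
  have hat : a < t := ht.lt_of_ne fun hat => ha.ne' (hat ▸ h.symm)
  have hmin : IsLocalMin x t := by
    filter_upwards [Ioi_mem_nhds hat] with u hu
    exact h ▸ hnonneg u hu.le
  exact hmin.hasDerivAt_eq_zero (hx t ht)

theorem eventually_le_of_hasDerivAt_le_neg {x x' : ℝ → ℝ} {T c δ : ℝ} (hδ : 0 < δ)
    (hx : ∀ t ≥ T, HasDerivAt x (x' t) t) (hdrift : ∀ t ≥ T, c ≤ x t → x' t ≤ -δ) :
    ∀ᶠ t in atTop, x t ≤ c := by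
  obtain ⟨t₀, ht₀, hxt₀⟩ : ∃ t₀ ≥ T, x t₀ ≤ c := by
    by_contra! habove
    set t₁ := T + (x T - c) / δ
    have hTt₁ : T ≤ t₁ :=
      le_add_of_nonneg_right (div_nonneg (sub_nonneg.2 (habove T le_rfl).le) hδ.le)
    have hdecay := image_le_of_deriv_right_le_deriv_boundary (f := x) (a := T) (b := t₁)
      (B := fun t => x T - δ * (t - T)) (B' := fun _ => -δ)
      (fun t ht => (hx t ht.1).continuousAt.continuousWithinAt)
      (fun t ht => (hx t ht.1).hasDerivWithinAt) (by simp) (by fun_prop)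
      (fun t _ => by simpa using (((hasDerivAt_id t).sub_const T).const_mul δ).const_sub (x T)
        |>.hasDerivWithinAt)
      (fun t ht => hdrift t ht.1 (habove t ht.1).le) ⟨hTt₁, le_rfl⟩
    have : δ * (t₁ - T) = x T - c := by simp only [t₁]; field_simp; ring
    linarith [habove t₁ hTt₁]
  have hstay := le_of_hasDerivAt_neg_of_eq_s19 (fun t ht => hx t (ht₀.trans ht)) hxt₀
    fun t ht h => (hdrift t (ht₀.trans ht) h.ge).trans_lt (neg_neg_of_pos hδ)
  exact eventually_atTop.2 ⟨t₀, hstay⟩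

theorem eventually_ge_of_hasDerivAt_ge_pos {x x' : ℝ → ℝ} {T c δ : ℝ} (hδ : 0 < δ)
    (hx : ∀ t ≥ T, HasDerivAt x (x' t) t) (hdrift : ∀ t ≥ T, x t ≤ c → δ ≤ x' t) :
    ∀ᶠ t in atTop, c ≤ x t := by
  have := eventually_le_of_hasDerivAt_le_neg (x := fun t => -x t) (c := -c) hδ
    (fun t ht => (hx t ht).neg) fun t ht h => neg_le_neg (hdrift t ht (neg_le_neg_iff.1 h))
  exact this.mono fun t h => neg_le_neg_iff.1 h

theorem eventually_ge_of_hasDerivAt_ge_mul_self {x x' : ℝ → ℝ} {T c η : ℝ} (hη : 0 < η)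
    (hc : 0 < c) (hx : ∀ t ≥ T, HasDerivAt x (x' t) t) (hxT : 0 < x T)
    (hgrow : ∀ t ≥ T, x t ≤ c → η * x t ≤ x' t) : ∀ᶠ t in atTop, c ≤ x t := by
  -- Below `c` the function grows, so it never drops below `c₀`;
  -- hence below `c` its growth rate is at least `η c₀`.
  set c₀ := min (x T) c
  have hc₀ : 0 < c₀ := lt_min hxT hc
  have hbelow : ∀ t ≥ T, c₀ ≤ x t := ge_of_hasDerivAt_pos_of_eq hx (min_le_left _ _)
    fun t ht h => by nlinarith [hgrow t ht (h ▸ min_le_right _ _)]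
  exact eventually_ge_of_hasDerivAt_ge_pos (mul_pos hη hc₀) hx fun t ht h =>
    (mul_le_mul_of_nonneg_left (hbelow t ht) hη.le).trans (hgrow t ht h)

theorem tendsto_of_hasDerivAt_logistic_add {x y : ℝ → ℝ} {T K C σ : ℝ} (hK : 0 < K) (hC : 0 < C)
    (hσ : 0 ≤ σ) (hx : ∀ t ≥ T, HasDerivAt x (x t * (K - C * (x t + y t)) + σ * y t) t)
    (hxpos : ∀ t ≥ T, 0 < x t) (hy : ∀ t ≥ T, 0 ≤ y t) (hy0 : Tendsto y atTop (𝓝 0)) :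
    Tendsto x atTop (𝓝 (K / C)) := by
  set L := K / C
  have hL : 0 < L := div_pos hK hC
  have hKL : K = C * L := (mul_div_cancel₀ K hC.ne').symm
  have hysmall : ∀ ε > 0, ∃ T' ≥ T, ∀ t ≥ T', y t ≤ ε := fun ε hε => by
    obtain ⟨T', hT'⟩ := eventually_atTop.1 (hy0.eventually (ge_mem_nhds hε))
    exact ⟨max T T', le_max_left _ _, fun t ht => hT' t ((le_max_right _ _).trans ht)⟩
  refine tendsto_order.2 ⟨fun a haL => ?_, fun b hLb => ?_⟩
  · obtain ⟨c, hac, hcL⟩ := exists_between (max_lt haL hL)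
    have hc : 0 < c := (le_max_right a 0).trans_lt hac
    obtain ⟨T', hT'T, hT'⟩ := hysmall ((L - c) / 2) (by linarith)
    have hgrow : ∀ t ≥ T', x t ≤ c →
        C * (L - c) / 2 * x t ≤ x t * (K - C * (x t + y t)) + σ * y t := fun t ht hxc => by
      have hxt := hxpos t (hT'T.trans ht)
      nlinarith [hT' t ht, mul_nonneg hσ (hy t (hT'T.trans ht)), mul_pos hC hxt]
    have := eventually_ge_of_hasDerivAt_ge_mul_self (by nlinarith) hc
      (fun t ht => hx t (hT'T.trans ht)) (hxpos T' hT'T) hgrow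
    exact this.mono fun t h => ((le_max_left a 0).trans_lt hac).trans_le h
  · obtain ⟨c, hLc, hcb⟩ := exists_between hLb
    set δ := C * c * (c - L)
    have hδ : 0 < δ := by have : 0 < c := hL.trans hLc; positivity
    obtain ⟨T', hT'T, hT'⟩ := hysmall (δ / 2 / (σ + 1)) (by positivity)
    have hdrift : ∀ t ≥ T', c ≤ x t → x t * (K - C * (x t + y t)) + σ * y t ≤ -(δ / 2) :=
      fun t ht hcx => by
        have hyt := hy t (hT'T.trans ht)
        have hσy : σ * y t ≤ δ / 2 := by
          have := (le_div_iff₀ (by positivity : (0:ℝ) < σ + 1)).1 (hT' t ht)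
          nlinarith
        rw [hKL]
        nlinarith [mul_nonneg (mul_nonneg hC.le (hxpos t (hT'T.trans ht)).le) hyt,
          mul_nonneg (mul_nonneg hC.le (sub_nonneg.2 hcx)) (by linarith : (0:ℝ) ≤ x t + c - L)]
    have := eventually_le_of_hasDerivAt_le_neg (by positivity)
      (fun t ht => hx t (hT'T.trans ht)) hdrift
    exact this.mono fun t h => h.trans_lt hcb

section HostVirus

variable {lam mu C D q kap sig r v mu2 m : ℝ} {n : ℝ → Fin 4 → ℝ}

theorem hasDerivAt_hostVirus_coord
    (hn : ∀ t ≥ 0, HasDerivAt n (hostVirusField lam mu C D q kap sig r v mu2 m (n t)) t)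
    (i : Fin 4) : ∀ t ≥ 0,
      HasDerivAt (fun u => n u i) (hostVirusField lam mu C D q kap sig r v mu2 m (n t) i) t :=
  fun t ht => hasDerivAt_pi.1 (hn t ht) i

theorem infected_virus_eq_zero
    (hn : ∀ t ≥ 0, HasDerivAt n (hostVirusField lam mu C D q kap sig r v mu2 m (n t)) t)
    (hinf : n 0 2 = 0) (hvir : n 0 3 = 0) : ∀ t ≥ 0, n t 2 = 0 ∧ n t 3 = 0 := by
  let fst := ContinuousLinearMap.fst ℝ ℝ ℝ
  let snd := ContinuousLinearMap.snd ℝ ℝ ℝ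
  let L₀ : ℝ × ℝ →L[ℝ] ℝ × ℝ := (-(r + v) • fst).prod ((m * v) • fst - mu2 • snd)
  let L₁ : ℝ × ℝ →L[ℝ] ℝ × ℝ := ((1 - q) * D) • snd.prod (-snd)
  have hA : ContinuousOn (fun t => L₀ + n t 0 • L₁) (Ici 0) := fun t ht =>
    (continuousWithinAt_const.add
      ((hasDerivAt_hostVirus_coord hn 0 t ht).continuousAt.continuousWithinAt.smul
        continuousWithinAt_const))
  have hf : ∀ t ≥ 0, HasDerivAt (fun u => (n u 2, n u 3)) ((L₀ + n t 0 • L₁) (n t 2, n t 3)) t :=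
    fun t ht => ((hasDerivAt_hostVirus_coord hn 2 t ht).prodMk
      (hasDerivAt_hostVirus_coord hn 3 t ht)).congr_deriv
        (by ext <;> simp [L₀, L₁, fst, snd, hostVirusField] <;> ring)
  exact fun t ht =>
    Prod.ext_iff.1 (eq_zero_of_hasDerivAt_clm_apply hA hf (by simp [hinf, hvir]) t ht)

theorem dormant_eq_mul_exp
    (hn : ∀ t ≥ 0, HasDerivAt n (hostVirusField lam mu C D q kap sig r v mu2 m (n t)) t)
    (hfree : ∀ t ≥ 0, n t 2 = 0 ∧ n t 3 = 0) :
    ∀ t ≥ 0, n t 1 = n 0 1 * exp (-(kap * mu + sig) * t) := by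
  have := eq_mul_exp_of_hasDerivAt_mul_self (x := fun u => n u 1) (c := -(kap * mu + sig)) (a := 0)
    fun t ht => (hasDerivAt_hostVirus_coord hn 1 t ht).congr_deriv
      (by simp [hostVirusField, (hfree t ht).2]; ring)
  simpa using this

theorem active_hasDerivAt
    (hn : ∀ t ≥ 0, HasDerivAt n (hostVirusField lam mu C D q kap sig r v mu2 m (n t)) t)
    (hfree : ∀ t ≥ 0, n t 2 = 0 ∧ n t 3 = 0) : ∀ t ≥ 0,
      HasDerivAt (fun u => n u 0) (n t 0 * (lam - mu - C * (n t 0 + n t 1)) + sig * n t 1) t :=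
  fun t ht => (hasDerivAt_hostVirus_coord hn 0 t ht).congr_deriv
    (by simp [hostVirusField, (hfree t ht).1, (hfree t ht).2])

end HostVirus

theorem convergence_to_virus_free_without_infection_general
    (lam mu C D q kap sig r v mu2 m : ℝ)
    (hmu : 0 < mu) (hlm : mu < lam) (hC : 0 < C)
    (hkap : 0 ≤ kap) (hsig : 0 < sig)
    (n : ℝ → (Fin 4 → ℝ))
    (hderiv : ∀ t : ℝ, 0 ≤ t → HasDerivAt n (hostVirusField lam mu C D q kap sig r v mu2 m (n t)) t)
    (h1a : 0 < n 0 0) (h1d : 0 < n 0 1) (h1i : n 0 2 = 0) (h2 : n 0 3 = 0) :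
    Tendsto n atTop (nhds ![(lam - mu) / C, 0, 0, 0]) := by
  have hfree := infected_virus_eq_zero hderiv h1i h2
  have hdormant := dormant_eq_mul_exp hderiv hfree
  have hβ : 0 < kap * mu + sig := by positivity
  have hdormant_pos : ∀ t ≥ 0, 0 < n t 1 := fun t ht => by rw [hdormant t ht]; positivity
  have hdormant_lim : Tendsto (fun t => n t 1) atTop (𝓝 0) := by
    have := (tendsto_exp_neg_atTop_nhds_zero.comp (tendsto_id.const_mul_atTop hβ)).const_mul (n 0 1)
    refine (mul_zero (n 0 1) ▸ this).congr' ?_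
    filter_upwards [eventually_ge_atTop 0] with t ht
    rw [hdormant t ht, neg_mul]
    rfl
  have hactive := active_hasDerivAt hderiv hfree
  have hactive_pos := pos_of_hasDerivAt_pos_of_eq_zero hactive h1a fun t ht h => by
    simpa [h] using mul_pos hsig (hdormant_pos t ht)
  have hactive_lim := tendsto_of_hasDerivAt_logistic_add (sub_pos.2 hlm) hC hsig.le hactive
    hactive_pos (fun t ht => (hdormant_pos t ht).le) hdormant_lim
  have hzero : ∀ i, (∀ t ≥ 0, n t i = 0) → Tendsto (fun t => n t i) atTop (𝓝 0) := fun i h =>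
    tendsto_const_nhds.congr' ((eventually_ge_atTop 0).mono fun t ht => (h t ht).symm)
  rw [tendsto_pi_nhds]
  intro i
  fin_cases i
  exacts [hactive_lim, hdormant_lim, hzero 2 fun t ht => (hfree t ht).1,
    hzero 3 fun t ht => (hfree t ht).2]

theorem convergence_to_virus_free_without_infection
    (lam mu C D q kap sig r v mu2 m : ℝ)
    (hmu : 0 < mu) (hlm : mu < lam) (hC : 0 < C) (hD : 0 < D)
    (hq0 : 0 < q) (hq1 : q < 1) (hkap : 0 ≤ kap) (hsig : 0 < sig)
    (hr : 0 < r) (hv : 0 < v) (hmu2 : 0 < mu2) (hm : 0 < m)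
    (n : ℝ → (Fin 4 → ℝ))
    (hderiv : ∀ t : ℝ, 0 ≤ t → HasDerivAt n (hostVirusField lam mu C D q kap sig r v mu2 m (n t)) t)
    (h1a : 0 < n 0 0) (h1d : 0 < n 0 1) (h1i : n 0 2 = 0) (h2 : n 0 3 = 0) :
    Tendsto n atTop (nhds ![(lam - mu) / C, 0, 0, 0]) :=
  convergence_to_virus_free_without_infection_general lam mu C D q kap sig r v mu2 m hmu hlm hC hkap
    hsig n hderiv h1a h1d h1i h2
end
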